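/- arXiv:1912.07151 — 10 statements merged into one kernel-verified Lean document; each statement's English description precedes it below -/
import Mathlib

section
/- Let d ≥ 1 and t ≥ 1 be integers. For every finite family X = (x_i)_{i∈I} of vectors in ℂ^d one has the Welch-type bound ∑_{i∈I} ∑_{j∈I} |⟨x_i, x_j⟩|^{2t} ≥ c_t(ℂ^d) · (∑_{i∈I} ‖x_i‖^{2t})², where c_t(ℂ^d) := 1 / (Nat.choose (t+d−1) t). -/
/-!
Lift each vector to its `t`-th symmetric tensor power: in the orthonormal basis of
`Sym^t 𝕜^κ` indexed by multisets `m`, with coefficients `√(multinomial m) · ∏ x_k`, one gets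
`⟪x^⊗t, y^⊗t⟫ = ⟪x, y⟫^t` in a space of dimension `C(n + t - 1, t)`, so it suffices to treat
`t = 1`. There, the frame operator `S = ∑ i, x_i x_iᴴ` has Hilbert–Schmidt norm
`‖S‖² = ∑ i j, |⟪x_i, x_j⟫|²` and diagonal entries summing to `∑ i, ‖x_i‖²`, and
Cauchy–Schwarz on the diagonal gives `(tr S)² ≤ n ∑ k, |S_kk|² ≤ n ‖S‖²`.
-/

open scoped ComplexConjugate

section

variable {𝕜 : Type*} [RCLike 𝕜] {κ ι : Type*}

noncomputable def symTensorPow [DecidableEq κ] (t : ℕ) (x : EuclideanSpace 𝕜 κ) :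
    EuclideanSpace 𝕜 (Sym κ t) :=
  WithLp.toLp 2 fun m => (√(m.val.countPerms : ℝ) : 𝕜) * (m.val.map x).prod

/-- The matrix `x xᴴ`, as a vector of the Hilbert–Schmidt space `EuclideanSpace 𝕜 (κ × κ)`. -/
noncomputable def selfOuter (x : EuclideanSpace 𝕜 κ) : EuclideanSpace 𝕜 (κ × κ) :=
  WithLp.toLp 2 fun p => x p.1 * conj (x p.2)

theorem selfOuter_apply_diag (x : EuclideanSpace 𝕜 κ) (k : κ) :
    selfOuter x (k, k) = (‖x k‖ ^ 2 : ℝ) := by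
  simp [selfOuter, RCLike.mul_conj]

variable [Fintype κ]

theorem inner_symTensorPow [DecidableEq κ] (t : ℕ) (x y : EuclideanSpace 𝕜 κ) :
    inner 𝕜 (symTensorPow t x) (symTensorPow t y) = inner 𝕜 x y ^ t := by
  simp only [PiLp.inner_apply, RCLike.inner_apply', symTensorPow]
  rw [Finset.sum_pow, Finset.sym_univ]
  refine Finset.sum_congr rfl fun m _ => ?_
  have hsqrt : (√(m.val.countPerms : ℝ) : 𝕜) * √(m.val.countPerms : ℝ) = m.val.countPerms := by
    rw [← RCLike.ofReal_mul, Real.mul_self_sqrt (Nat.cast_nonneg _), RCLike.ofReal_natCast]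
  rw [map_mul, RCLike.conj_ofReal, map_multiset_prod, Multiset.map_map, Multiset.prod_map_mul,
    ← hsqrt]
  simp only [Function.comp_def]
  ring

theorem norm_symTensorPow [DecidableEq κ] (t : ℕ) (x : EuclideanSpace 𝕜 κ) :
    ‖symTensorPow t x‖ = ‖x‖ ^ t := by
  have h := inner_symTensorPow t x x
  rw [inner_self_eq_norm_sq_to_K, inner_self_eq_norm_sq_to_K, ← pow_mul, mul_comm, pow_mul] at h
  exact (pow_left_inj₀ (norm_nonneg _) (by positivity) two_ne_zero).mp (by exact_mod_cast h)

theorem inner_selfOuter (x y : EuclideanSpace 𝕜 κ) :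
    inner 𝕜 (selfOuter x) (selfOuter y) = (‖inner 𝕜 x y‖ ^ 2 : ℝ) := by
  simp only [PiLp.inner_apply, RCLike.inner_apply', selfOuter, Fintype.sum_prod_type]
  rw [RCLike.ofReal_pow, ← RCLike.mul_conj, map_sum, Finset.sum_mul_sum]
  simp only [map_mul, RCLike.conj_conj]
  exact Fintype.sum_congr _ _ fun _ => Fintype.sum_congr _ _ fun _ => by ring

theorem sum_norm_diag_sq_le_norm_sq (z : EuclideanSpace 𝕜 (κ × κ)) :
    ∑ k, ‖z (k, k)‖ ^ 2 ≤ ‖z‖ ^ 2 := by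
  rw [EuclideanSpace.norm_sq_eq, Fintype.sum_prod_type]
  exact Finset.sum_le_sum fun k _ =>
    Finset.single_le_sum (f := fun l => ‖z (k, l)‖ ^ 2) (fun _ _ => by positivity)
      (Finset.mem_univ k)

variable [Fintype ι]

theorem norm_sum_selfOuter_sq (y : ι → EuclideanSpace 𝕜 κ) :
    ‖∑ i, selfOuter (y i)‖ ^ 2 = ∑ i, ∑ j, ‖inner 𝕜 (y i) (y j)‖ ^ 2 := by
  apply RCLike.ofReal_injective (K := 𝕜)
  rw [RCLike.ofReal_pow, ← inner_self_eq_norm_sq_to_K, sum_inner]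
  simp only [inner_sum, inner_selfOuter]
  push_cast
  rfl

theorem sq_sum_norm_sq_le_card_mul_sum_sum_norm_inner_sq (y : ι → EuclideanSpace 𝕜 κ) :
    (∑ i, ‖y i‖ ^ 2) ^ 2 ≤ Fintype.card κ * ∑ i, ∑ j, ‖inner 𝕜 (y i) (y j)‖ ^ 2 := by
  set S := ∑ i, selfOuter (y i)
  have hdiag : ∀ k, ‖S (k, k)‖ = ∑ i, ‖y i k‖ ^ 2 := fun k => by
    simp only [S, WithLp.ofLp_sum, Finset.sum_apply, selfOuter_apply_diag]
    rw [← RCLike.ofReal_sum, RCLike.norm_ofReal, abs_of_nonneg (by positivity)]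
  calc (∑ i, ‖y i‖ ^ 2) ^ 2 = (∑ k, ‖S (k, k)‖) ^ 2 := by
        simp only [hdiag, EuclideanSpace.norm_sq_eq]
        rw [Finset.sum_comm]
    _ ≤ Fintype.card κ * ∑ k, ‖S (k, k)‖ ^ 2 := sq_sum_le_card_mul_sum_sq
    _ ≤ Fintype.card κ * ‖S‖ ^ 2 := by gcongr; exact sum_norm_diag_sq_le_norm_sq S
    _ = Fintype.card κ * ∑ i, ∑ j, ‖inner 𝕜 (y i) (y j)‖ ^ 2 := by rw [norm_sum_selfOuter_sq]

theorem sq_sum_norm_pow_le_choose_mul_sum_sum_norm_inner_pow [DecidableEq κ] (t : ℕ)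
    (x : ι → EuclideanSpace 𝕜 κ) :
    (∑ i, ‖x i‖ ^ (2 * t)) ^ 2 ≤
      (Fintype.card κ + t - 1).choose t * ∑ i, ∑ j, ‖inner 𝕜 (x i) (x j)‖ ^ (2 * t) := by
  have h := sq_sum_norm_sq_le_card_mul_sum_sum_norm_inner_sq fun i => symTensorPow t (x i)
  simp only [norm_symTensorPow, inner_symTensorPow, norm_pow, ← pow_mul,
    Sym.card_sym_eq_choose] at h
  simpa only [mul_comm t 2] using h

end

theorem welch_bound_complex_general (d t : ℕ)
    {ι : Type*} [Fintype ι] (x : ι → EuclideanSpace ℂ (Fin d)) :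
    ∑ i, ∑ j, ‖(inner ℂ (x i) (x j) : ℂ)‖ ^ (2 * t) ≥
      (1 / (Nat.choose (t + d - 1) t : ℝ)) * (∑ i, ‖x i‖ ^ (2 * t)) ^ 2 := by
  have h := sq_sum_norm_pow_le_choose_mul_sum_sum_norm_inner_pow t x
  rw [Fintype.card_fin, Nat.add_comm d t, mul_comm _ (_ : ℝ)] at h
  rw [ge_iff_le, one_div_mul_eq_div]
  exact div_le_of_le_mul₀ (by positivity) (by positivity) h

/-- **Welch-type bound (complex case).**
For every finite family of vectors in `ℂ^d`,
`∑ i ∑ j |⟨x i, x j⟩|^(2t) ≥ c_t(ℂ^d) * (∑ i ‖x i‖^(2t))^2`,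
where `c_t(ℂ^d) = 1 / (t+d-1 choose t)`. -/
theorem welch_bound_complex (d t : ℕ) (hd : 1 ≤ d) (ht : 1 ≤ t)
    {ι : Type*} [Fintype ι] (x : ι → EuclideanSpace ℂ (Fin d)) :
    ∑ i, ∑ j, ‖(inner ℂ (x i) (x j) : ℂ)‖ ^ (2 * t) ≥
      (1 / (Nat.choose (t + d - 1) t : ℝ)) * (∑ i, ‖x i‖ ^ (2 * t)) ^ 2 :=
  welch_bound_complex_general d t x
end

section
/- Let d ≥ 1 and t ≥ 1 be integers. For every finite family X = (x_i)_{i∈I} of vectors in ℝ^d one has the sharpened Welch-type bound ∑_{i∈I} ∑_{j∈I} |⟨x_i, x_j⟩|^{2t} ≥ c_t(ℝ^d) · (∑_{i∈I} ‖x_i‖^{2t})², where c_t(ℝ^d) := (1·3·5···(2t−1)) / (d(d+2)···(d+2(t−1))). -/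
open scoped BigOperators

/-!
Let `g` be a standard Gaussian vector in `ℝ^d`, `T = ∑ i, (x i)^{⊗2t}` and `W = E[g^{⊗2t}]`.
Then `⟪T, T⟫ = ∑ i, ∑ j, ⟪x i, x j⟫^{2t}`, and since `⟪W, w^{⊗2t}⟫ = E[⟪w, g⟫^{2t}] =
(2t-1)!! ‖w‖^{2t}` for every `w`, also `⟪T, W⟫ = (2t-1)!! ∑ i, ‖x i‖^{2t}` and
`⟪W, W⟫ = (2t-1)!! E[‖g‖^{2t}] = (2t-1)!! d(d+2)⋯(d+2t-2)`. Cauchy–Schwarz `⟪T, W⟫² ≤ ⟪T, T⟫ ⟪W, W⟫`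
is the bound.

The Gaussian expectation is only applied to polynomials, so it is replaced by the linear functional
on `MvPolynomial` fixed by the Gaussian moments; every expectation above then follows from Stein's
identity `E[g_c p(g)] = E[∂_c p(g)]`.
-/

open MvPolynomial Finset

noncomputable section

section GaussianExpectation

variable {σ : Type*} [Fintype σ] {R : Type*} [CommRing R]

-- The moments `E[g^n]` of a standard Gaussian `g`.
def gaussMoment : ℕ → R
  | 0 => 1
  | 1 => 0
  | n + 2 => (n + 1) * gaussMoment n

lemma gaussMoment_add_two (n : ℕ) : (gaussMoment (n + 2) : R) = (n + 1) * gaussMoment n := rfl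

lemma gaussMoment_succ (n : ℕ) : (gaussMoment (n + 1) : R) = n * gaussMoment (n - 1) := by
  cases n with
  | zero => simp [gaussMoment]
  | succ m => simpa using gaussMoment_add_two m

lemma gaussMoment_two_mul (t : ℕ) :
    (gaussMoment (2 * t) : R) = ∏ k ∈ range t, (2 * k + 1 : R) := by
  induction t with
  | zero => simp [gaussMoment]
  | succ s ih =>
    rw [mul_add_one, gaussMoment_add_two, prod_range_succ, ih]
    push_cast
    ring

variable (σ R) in
-- `p ↦ E[p(g)]` for a standard Gaussian vector `g`: the coordinates are independent.
def gaussExpectation : MvPolynomial σ R →ₗ[R] R :=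
  (basisMonomials σ R).constr R fun α => ∏ c, gaussMoment (α c)

lemma gaussExpectation_monomial (α : σ →₀ ℕ) (r : R) :
    gaussExpectation σ R (monomial α r) = r * ∏ c, gaussMoment (α c) := by
  have hbasis : monomial α r = r • basisMonomials σ R α := by
    rw [coe_basisMonomials, smul_monomial, smul_eq_mul, mul_one]
  rw [hbasis, map_smul, gaussExpectation, Module.Basis.constr_basis, smul_eq_mul]

lemma gaussExpectation_one : gaussExpectation σ R 1 = 1 := by
  rw [← C_1, C_apply, gaussExpectation_monomial]
  simp [gaussMoment]

lemma gaussExpectation_C_mul (r : R) (p : MvPolynomial σ R) :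
    gaussExpectation σ R (C r * p) = r * gaussExpectation σ R p := by
  rw [C_mul', map_smul, smul_eq_mul]

variable [DecidableEq σ]

lemma prod_gaussMoment_of_eq_off (α β : σ → ℕ) (c : σ) (h : ∀ c' ≠ c, β c' = α c') :
    ∏ c', (gaussMoment (β c') : R)
      = gaussMoment (β c) * ∏ c' ∈ univ.erase c, gaussMoment (α c') := by
  rw [← mul_prod_erase univ _ (mem_univ c)]
  exact congrArg _ <| prod_congr rfl fun c' hc' => by rw [h c' (ne_of_mem_erase hc')]

-- Stein's identity.
lemma gaussExpectation_X_mul (c : σ) (p : MvPolynomial σ R) :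
    gaussExpectation σ R (X c * p) = gaussExpectation σ R (pderiv c p) := by
  induction p using MvPolynomial.induction_on' with
  | add p q hp hq => rw [mul_add, map_add, map_add, map_add, hp, hq]
  | monomial α r =>
    have hne : ∀ c' ≠ c, Finsupp.single c 1 c' = 0 := fun c' h => Finsupp.single_eq_of_ne h
    rw [← pow_one (X c), ← monomial_single_add, pderiv_monomial, gaussExpectation_monomial,
      gaussExpectation_monomial,
      prod_gaussMoment_of_eq_off α _ c fun c' h => by simp [hne c' h],
      prod_gaussMoment_of_eq_off α _ c fun c' h => by simp [hne c' h]]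
    simp only [Finsupp.add_apply, Finsupp.tsub_apply, Finsupp.single_eq_same]
    rw [add_comm 1, gaussMoment_succ]
    ring

variable (v : σ → R)

def linearForm : MvPolynomial σ R := ∑ c, C (v c) * X c

variable (σ R) in
def sumSqX : MvPolynomial σ R := ∑ c, X c ^ 2

lemma pderiv_linearForm (c : σ) : pderiv c (linearForm v) = C (v c) := by
  simp [linearForm, pderiv_X, Pi.single_apply]

lemma pderiv_sumSqX (c : σ) : pderiv c (sumSqX σ R) = 2 * X c := by
  simp [sumSqX, pderiv_X, Pi.single_apply]

lemma gaussExpectation_linearForm_pow_add_two (k : ℕ) :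
    gaussExpectation σ R (linearForm v ^ (k + 2))
      = (k + 1) * (v ⬝ᵥ v) * gaussExpectation σ R (linearForm v ^ k) := by
  have hterm (c : σ) : gaussExpectation σ R (C (v c) * (X c * linearForm v ^ (k + 1)))
      = (k + 1) * (v c * v c) * gaussExpectation σ R (linearForm v ^ k) := by
    have hpoly : ((k + 1 : ℕ) : MvPolynomial σ R) * linearForm v ^ k * C (v c)
        = C ((k + 1) * v c) * linearForm v ^ k := by
      rw [map_mul, ← map_natCast C]
      push_cast
      ring
    rw [gaussExpectation_C_mul, gaussExpectation_X_mul, pderiv_pow, pderiv_linearForm,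
      Nat.add_sub_cancel, hpoly, gaussExpectation_C_mul]
    ring
  have hexpand : linearForm v ^ (k + 2) = ∑ c, C (v c) * (X c * linearForm v ^ (k + 1)) := by
    rw [pow_succ', linearForm, sum_mul]
    simp only [mul_assoc]
  rw [hexpand, map_sum, sum_congr rfl fun c _ => hterm c, ← sum_mul, ← mul_sum, dotProduct]

lemma gaussExpectation_linearForm_pow_two_mul (t : ℕ) :
    gaussExpectation σ R (linearForm v ^ (2 * t)) = gaussMoment (2 * t) * (v ⬝ᵥ v) ^ t := by
  induction t with
  | zero => simp [gaussExpectation_one, gaussMoment]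
  | succ s ih =>
    rw [mul_add_one, gaussExpectation_linearForm_pow_add_two, ih, gaussMoment_add_two]
    push_cast
    ring

lemma sum_X_mul_pderiv_sumSqX_pow (s : ℕ) :
    ∑ c, X c * pderiv c (sumSqX σ R ^ s) = 2 * s * sumSqX σ R ^ s := by
  cases s with
  | zero => simp
  | succ s =>
    simp only [pderiv_pow, pderiv_sumSqX, Nat.add_sub_cancel]
    rw [pow_succ, ← mul_assoc, sumSqX, mul_sum]
    exact sum_congr rfl fun c _ => by ring

lemma gaussExpectation_sumSqX_pow (t : ℕ) :
    gaussExpectation σ R (sumSqX σ R ^ t) = ∏ j ∈ range t, (Fintype.card σ + 2 * j : R) := by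
  induction t with
  | zero => simp [gaussExpectation_one]
  | succ s ih =>
    have hdiv : gaussExpectation σ R (sumSqX σ R ^ (s + 1))
        = gaussExpectation σ R (∑ c, pderiv c (X c * sumSqX σ R ^ s)) := by
      rw [pow_succ', sumSqX, sum_mul, map_sum, map_sum]
      simp only [sq, mul_assoc, gaussExpectation_X_mul]
    have hsum : ∑ c, pderiv c (X c * sumSqX σ R ^ s)
        = C (Fintype.card σ + 2 * s : R) * sumSqX σ R ^ s := by
      simp only [Derivation.leibniz, pderiv_X_self, smul_eq_mul, mul_one, sum_add_distrib,
        sum_X_mul_pderiv_sumSqX_pow, sum_const, card_univ, nsmul_eq_mul]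
      rw [map_add, map_mul, map_natCast, map_natCast, map_ofNat]
      ring
    rw [hdiv, hsum, gaussExpectation_C_mul, ih, prod_range_succ]
    ring

end GaussianExpectation

section MomentTensor

variable {σ : Type*} [Fintype σ] [DecidableEq σ] {R : Type*} [CommRing R]

variable (σ R) in
-- Entries `E[g (a 0) ⋯ g (a (n - 1))]` of the moment tensor `E[g ⊗ ⋯ ⊗ g]`.
def gaussMomentTensor (n : ℕ) (a : Fin n → σ) : R := gaussExpectation σ R (∏ s, X (a s))

omit [DecidableEq σ] in
lemma gaussExpectation_linearForm_pow (v : σ → R) (n : ℕ) :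
    gaussExpectation σ R (linearForm v ^ n)
      = ∑ a : Fin n → σ, (∏ s, v (a s)) * gaussMomentTensor σ R n a := by
  rw [linearForm, Fintype.sum_pow, map_sum]
  refine sum_congr rfl fun a _ => ?_
  rw [prod_mul_distrib, ← map_prod, gaussExpectation_C_mul, gaussMomentTensor]

lemma sum_prod_mul_gaussMomentTensor (v : σ → R) (t : ℕ) :
    ∑ a : Fin (2 * t) → σ, (∏ s, v (a s)) * gaussMomentTensor σ R (2 * t) a
      = gaussMoment (2 * t) * (v ⬝ᵥ v) ^ t := by
  rw [← gaussExpectation_linearForm_pow, gaussExpectation_linearForm_pow_two_mul]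

lemma sum_gaussMomentTensor_sq [IsDomain R] [Infinite R] (t : ℕ) :
    ∑ a, gaussMomentTensor σ R (2 * t) a ^ 2
      = gaussMoment (2 * t) * ∏ j ∈ range t, (Fintype.card σ + 2 * j : R) := by
  have hpoly : ∑ a, C (gaussMomentTensor σ R (2 * t) a) * ∏ s, X (a s)
      = C (gaussMoment (2 * t)) * sumSqX σ R ^ t := by
    refine MvPolynomial.funext fun w => ?_
    simp only [map_sum, map_mul, map_prod, map_pow, eval_C, eval_X, sumSqX, mul_comm (C _)]
    rw [sum_prod_mul_gaussMomentTensor, mul_comm]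
    simp only [dotProduct, sq]
  calc ∑ a, gaussMomentTensor σ R (2 * t) a ^ 2
      = gaussExpectation σ R (∑ a, C (gaussMomentTensor σ R (2 * t) a) * ∏ s, X (a s)) := by
        simp only [map_sum, gaussExpectation_C_mul, sq, gaussMomentTensor]
    _ = _ := by rw [hpoly, gaussExpectation_C_mul, gaussExpectation_sumSqX_pow]

end MomentTensor

section DotProduct

variable {σ : Type*} [Fintype σ] {R : Type*} [CommRing R] {ι : Type*} [Fintype ι]

lemma dotProduct_pow_eq_sum (u v : σ → R) (n : ℕ) :
    (u ⬝ᵥ v) ^ n = ∑ a : Fin n → σ, (∏ s, u (a s)) * ∏ s, v (a s) := by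
  simp only [dotProduct, Fintype.sum_pow, prod_mul_distrib]

lemma sum_sum_dotProduct_pow (u : ι → σ → R) (n : ℕ) :
    ∑ i, ∑ j, (u i ⬝ᵥ u j) ^ n = ∑ a : Fin n → σ, (∑ i, ∏ s, u i (a s)) ^ 2 := by
  simp only [dotProduct_pow_eq_sum, sq, sum_mul_sum]
  exact sum_comm_cycle

end DotProduct

end

lemma gaussMoment_two_mul_pos {R : Type*} [CommRing R] [PartialOrder R] [IsStrictOrderedRing R]
    (t : ℕ) : (0 : R) < gaussMoment (2 * t) := by
  rw [gaussMoment_two_mul]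
  exact prod_pos fun k _ => by positivity

lemma div_mul_sq_le_sum_sq {𝕜 : Type*} [Field 𝕜] [LinearOrder 𝕜] [IsStrictOrderedRing 𝕜]
    {α : Type*} [Fintype α] (T W : α → 𝕜) {G A S : 𝕜} (hG : 0 < G)
    (hTW : ∑ a, T a * W a = G * S) (hWW : ∑ a, W a ^ 2 = G * A) :
    G / A * S ^ 2 ≤ ∑ a, T a ^ 2 := by
  have hCS : (G * S) ^ 2 ≤ (∑ a, T a ^ 2) * (G * A) :=
    hTW ▸ hWW ▸ sum_mul_sq_le_sq_mul_sq univ T W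
  have hA : 0 ≤ A := nonneg_of_mul_nonneg_right (hWW ▸ sum_nonneg fun a _ => sq_nonneg (W a)) hG
  rcases hA.eq_or_lt with rfl | hA
  · simpa using sum_nonneg fun a _ => sq_nonneg (T a)
  · rw [div_mul_eq_mul_div, div_le_iff₀ hA]
    refine le_of_mul_le_mul_left ?_ hG
    linarith

theorem welch_bound_dotProduct {σ : Type*} [Fintype σ] {ι : Type*} [Fintype ι]
    (u : ι → σ → ℝ) (t : ℕ) :
    (∏ k ∈ range t, ((2 * k + 1 : ℝ) / (Fintype.card σ + 2 * k))) * (∑ i, (u i ⬝ᵥ u i) ^ t) ^ 2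
      ≤ ∑ i, ∑ j, (u i ⬝ᵥ u j) ^ (2 * t) := by
  classical
  rw [prod_div_distrib, ← gaussMoment_two_mul, sum_sum_dotProduct_pow]
  have hTW : ∑ a, (∑ i, ∏ s, u i (a s)) * gaussMomentTensor σ ℝ (2 * t) a
      = gaussMoment (2 * t) * ∑ i, (u i ⬝ᵥ u i) ^ t := by
    simp only [sum_mul]
    rw [sum_comm]
    simp only [sum_prod_mul_gaussMomentTensor, mul_sum]
  exact div_mul_sq_le_sum_sq _ _ (gaussMoment_two_mul_pos t) hTW (sum_gaussMomentTensor_sq t)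

theorem welch_bound_real_general (d t : ℕ)
    {ι : Type*} [Fintype ι] (x : ι → EuclideanSpace ℝ (Fin d)) :
    ∑ i, ∑ j, |(inner ℝ (x i) (x j) : ℝ)| ^ (2 * t) ≥
      (∏ k ∈ Finset.range t, ((2 * k + 1 : ℝ) / (d + 2 * k))) *
        (∑ i, ‖x i‖ ^ (2 * t)) ^ 2 := by
  have hinner (i j : ι) :
      |(inner ℝ (x i) (x j) : ℝ)| ^ (2 * t) = ((x i).ofLp ⬝ᵥ (x j).ofLp) ^ (2 * t) := by
    rw [(even_two_mul t).pow_abs, EuclideanSpace.inner_eq_star_dotProduct, star_trivial,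
      dotProduct_comm]
  have hnorm (i : ι) : ‖x i‖ ^ (2 * t) = ((x i).ofLp ⬝ᵥ (x i).ofLp) ^ t := by
    rw [pow_mul, ← real_inner_self_eq_norm_sq, EuclideanSpace.inner_eq_star_dotProduct,
      star_trivial]
  simp only [hinner, hnorm]
  simpa using welch_bound_dotProduct (fun i => (x i).ofLp) t

/-- **Sharpened Welch-type bound (real case).**
For every finite family of vectors in `ℝ^d`,
`∑ i ∑ j |⟨x i, x j⟩|^(2t) ≥ c_t(ℝ^d) * (∑ i ‖x i‖^(2t))^2`,
where `c_t(ℝ^d) = (1·3·5⋯(2t-1)) / (d(d+2)⋯(d+2(t-1)))`. -/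
theorem welch_bound_real (d t : ℕ) (hd : 1 ≤ d) (ht : 1 ≤ t)
    {ι : Type*} [Fintype ι] (x : ι → EuclideanSpace ℝ (Fin d)) :
    ∑ i, ∑ j, |(inner ℝ (x i) (x j) : ℝ)| ^ (2 * t) ≥
      (∏ k ∈ Finset.range t, ((2 * k + 1 : ℝ) / (d + 2 * k))) *
        (∑ i, ‖x i‖ ^ (2 * t)) ^ 2 :=
  welch_bound_real_general d t x
end

section
/- Let d ≥ 1 and t ≥ 1 be integers, and let X = (x_i)_{i∈I} and Y = (y_j)_{j∈J} be finite families of nonzero vectors in ℂ^d, each of which is a spherical (t,t)-design. Then the cross-correlation identity holds: ∑_{i∈I}∑_{j∈J} |⟨x_i, y_j⟩|^{2t} = c_t(ℂ^d) · (∑_{i∈I} ‖x_i‖^{2t}) · (∑_{j∈J} ‖y_j‖^{2t}). -/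
open scoped BigOperators

/-- `c_t(ℂ^d) = 1 / (t+d-1 choose t)`. -/
noncomputable def designConst (d t : ℕ) : ℝ := 1 / (Nat.choose (t + d - 1) t : ℝ)

/-- A finite family of vectors in `ℂ^d` is a spherical `(t,t)`-design if it gives
equality in the Welch-type bound. -/
def IsSphericalDesign (d t : ℕ) {ι : Type*} [Fintype ι]
    (x : ι → EuclideanSpace ℂ (Fin d)) : Prop :=
  ∑ i, ∑ j, ‖(inner ℂ (x i) (x j) : ℂ)‖ ^ (2 * t) =
    designConst d t * (∑ i, ‖x i‖ ^ (2 * t)) ^ 2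

/-!
The operators `x^{⊗t} (x^{⊗t})^*`, seen as vectors of the Hilbert–Schmidt space over
`(ℂ^d)^{⊗t}`, have inner products `|⟨x, y⟩|^{2t}`, and their inner product with the symmetrizer
`P = (1/t!) ∑_σ P_σ` is `‖x‖^{2t}`. Moreover `‖P‖² = (1/t!) ∑_σ #Fix(σ)`, which by Burnside's
lemma is the number of multisets of size `t` from `d` letters, `1 / c_t(ℂ^d)`. So for the frame
operator `T_X = ∑ x_i^{⊗t} (x_i^{⊗t})^*` the design identity is the equality case of
Cauchy–Schwarz between `T_X` and `P`, i.e. `T_X = c_t (∑ ‖x_i‖^{2t}) P`; pairing with `T_Y`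
gives the cross-correlation.
-/

open Finset Equiv MulAction
open scoped Nat

section PermOrbits

variable {α : Type*}

theorem map_univ_val_comp_perm {ι : Type*} [Fintype ι] (f : ι → α) (σ : Perm ι) :
    univ.val.map (f ∘ σ) = univ.val.map f := by
  rw [← Multiset.map_map]
  congr 1
  simp

theorem exists_perm_of_map_univ_val_eq {ι : Type*} [Fintype ι] [DecidableEq α] {f g : ι → α}
    (h : univ.val.map f = univ.val.map g) : ∃ σ : Perm ι, f = g ∘ σ := by
  have hfiber (c : α) : Fintype.card {i // f i = c} = Fintype.card {i // g i = c} := by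
    simpa [Fintype.card_subtype, Multiset.count_map, eq_comm, card_def] using
      congrArg (Multiset.count c) h
  refine ⟨ofFiberEquiv fun c => Fintype.equivOfCardEq (hfiber c), funext fun i => ?_⟩
  exact (ofFiberEquiv_map _ i).symm

variable {t : ℕ}

def symOfFn (f : Fin t → α) : Sym α t := Sym.mk (univ.val.map f) (by simp)

theorem symOfFn_surjective : Function.Surjective (symOfFn : (Fin t → α) → Sym α t) := by
  rintro ⟨m, hm⟩
  have hlen : m.toList.length = t := by simpa using hm
  refine ⟨fun i => m.toList.get (i.cast hlen.symm), Sym.ext ?_⟩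
  simp only [symOfFn, Sym.coe_mk, Fin.univ_val_map]
  conv_rhs => rw [← Multiset.coe_toList m]
  congr 1
  apply List.ext_getElem <;> simp [hlen]

attribute [local instance] arrowAction

theorem perm_smul_eq_comp (σ : Perm (Fin t)) (f : Fin t → α) : σ • f = f ∘ ⇑σ⁻¹ := rfl

theorem orbitRel_perm_iff [DecidableEq α] {f g : Fin t → α} :
    orbitRel (Perm (Fin t)) (Fin t → α) f g ↔ symOfFn f = symOfFn g := by
  simp only [orbitRel_apply, mem_orbit_iff, perm_smul_eq_comp, symOfFn, ← Sym.coe_inj,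
    Sym.coe_mk]
  constructor
  · rintro ⟨σ, rfl⟩
    exact map_univ_val_comp_perm g σ⁻¹
  · intro h
    obtain ⟨σ, rfl⟩ := exists_perm_of_map_univ_val_eq h
    exact ⟨σ⁻¹, by rw [inv_inv]⟩

theorem sum_card_fixed_comp_perm [Fintype α] [DecidableEq α] (t : ℕ) :
    ∑ σ : Perm (Fin t), #{f : Fin t → α | f ∘ σ = f} =
      t ! * Nat.multichoose (Fintype.card α) t := by
  classical
  have hfixed (σ : Perm (Fin t)) :
      #{f : Fin t → α | f ∘ σ = f} = Fintype.card (fixedBy (Fin t → α) σ⁻¹) := by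
    rw [← Set.toFinset_card]
    congr 1
    ext f
    simp only [Set.mem_toFinset, mem_fixedBy, perm_smul_eq_comp, inv_inv, mem_filter, mem_univ,
      true_and]
  let orbitsEquivSym : orbitRel.Quotient (Perm (Fin t)) (Fin t → α) ≃ Sym α t :=
    (Quotient.congrRight fun _ _ => orbitRel_perm_iff).trans
      (Setoid.quotientKerEquivOfSurjective _ symOfFn_surjective)
  rw [Fintype.sum_equiv (Equiv.inv _) _ (fun ρ => Fintype.card (fixedBy (Fin t → α) ρ)) hfixed,
    sum_card_fixedBy_eq_card_orbits_mul_card_group, Fintype.card_congr orbitsEquivSym,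
    Sym.card_sym_eq_multichoose, Fintype.card_perm, Fintype.card_fin, mul_comm]

theorem sum_sum_card_comp_eq_comp [Fintype α] [DecidableEq α] (t : ℕ) :
    ∑ σ : Perm (Fin t), ∑ τ : Perm (Fin t), #{f : Fin t → α | f ∘ σ = f ∘ τ} =
      t ! * (t ! * Nat.multichoose (Fintype.card α) t) := by
  have hshift (σ τ : Perm (Fin t)) :
      #{f : Fin t → α | f ∘ σ = f ∘ τ} = #{f : Fin t → α | f ∘ ⇑(σ * τ⁻¹) = f} := by
    refine congrArg card (filter_congr fun f _ => ?_)
    constructor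
    · intro h
      rw [Perm.coe_mul, ← Function.comp_assoc, h]
      ext k
      simp
    · intro h
      conv_rhs => rw [← h]
      ext k
      simp
  have hreindex (τ : Perm (Fin t)) :
      ∑ σ : Perm (Fin t), #{f : Fin t → α | f ∘ ⇑(σ * τ⁻¹) = f} =
        ∑ ρ : Perm (Fin t), #{f : Fin t → α | f ∘ ρ = f} :=
    Fintype.sum_equiv (Equiv.mulRight τ⁻¹) _ _ fun _ => rfl
  rw [sum_comm]
  simp only [hshift, hreindex, sum_card_fixed_comp_perm, sum_const, card_univ, Fintype.card_perm,
    Fintype.card_fin, smul_eq_mul]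

end PermOrbits

open scoped InnerProductSpace ComplexConjugate

/-- Equality case of Cauchy–Schwarz; when `n = 0` the junk value `a ^ 2 / 0 = 0` forces
`v = 0`. -/
theorem eq_smul_of_inner_self_eq_sq_div {𝕜 E : Type*} [RCLike 𝕜] [NormedAddCommGroup E]
    [InnerProductSpace 𝕜 E] {p v : E} {a n : ℝ} (hp : ⟪p, p⟫_𝕜 = n) (hpv : ⟪p, v⟫_𝕜 = a)
    (hv : ⟪v, v⟫_𝕜 = (a ^ 2 / n : ℝ)) : v = ((a / n : ℝ) : 𝕜) • p := by
  rw [← sub_eq_zero, ← inner_self_eq_zero (𝕜 := 𝕜)]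
  by_cases hn : n = 0
  · have hp0 : p = 0 := inner_self_eq_zero.mp (by rw [hp, hn, RCLike.ofReal_zero])
    simpa [hp0, hn] using hv
  · rw [inner_sub_left, inner_sub_right, inner_sub_right, inner_smul_left, inner_smul_right,
      inner_smul_left, inner_smul_right, hp, hv, hpv, ← inner_conj_symm v p, hpv]
    simp only [RCLike.conj_ofReal]
    push_cast
    field_simp
    ring

section TensorPowers

variable {α : Type*}

noncomputable def tensorPow (t : ℕ) (x : EuclideanSpace ℂ α) : EuclideanSpace ℂ (Fin t → α) :=
  WithLp.toLp 2 fun a => ∏ k, x (a k)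

theorem tensorPow_apply_comp_perm {t : ℕ} (x : EuclideanSpace ℂ α) (a : Fin t → α)
    (σ : Perm (Fin t)) : tensorPow t x (a ∘ σ) = tensorPow t x a :=
  Equiv.prod_comp σ fun k => x (a k)

variable [Fintype α]

theorem inner_tensorPow (t : ℕ) (x y : EuclideanSpace ℂ α) :
    ⟪tensorPow t x, tensorPow t y⟫_ℂ = ⟪x, y⟫_ℂ ^ t := by
  simp only [PiLp.inner_apply, RCLike.inner_apply, tensorPow, map_prod, ← prod_mul_distrib]
  rw [Fintype.sum_pow]

/-- The rank-one operator `v v^*` as the vector of its matrix entries, so that inner products of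
such vectors are Hilbert–Schmidt inner products. -/
noncomputable def outerSelf {m : Type*} (v : EuclideanSpace ℂ m) : EuclideanSpace ℂ (m × m) :=
  WithLp.toLp 2 fun p => v p.1 * conj (v p.2)

theorem inner_outerSelf {m : Type*} [Fintype m] (u v : EuclideanSpace ℂ m) :
    ⟪outerSelf u, outerSelf v⟫_ℂ = (‖⟪u, v⟫_ℂ‖ ^ 2 : ℝ) := by
  push_cast
  rw [← Complex.mul_conj']
  simp only [PiLp.inner_apply, RCLike.inner_apply, outerSelf, map_mul, map_sum, Complex.conj_conj,
    Fintype.sum_prod_type, sum_mul_sum]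
  refine sum_congr rfl fun a _ => sum_congr rfl fun b _ => ?_
  ring

noncomputable def tensorFrame {ι : Type*} [Fintype ι] (t : ℕ) (x : ι → EuclideanSpace ℂ α) :
    EuclideanSpace ℂ ((Fin t → α) × (Fin t → α)) :=
  ∑ i, outerSelf (tensorPow t (x i))

theorem inner_tensorFrame {ι κ : Type*} [Fintype ι] [Fintype κ] (t : ℕ)
    (x : ι → EuclideanSpace ℂ α) (y : κ → EuclideanSpace ℂ α) :
    ⟪tensorFrame t x, tensorFrame t y⟫_ℂ = (∑ i, ∑ j, ‖⟪x i, y j⟫_ℂ‖ ^ (2 * t) : ℝ) := by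
  rw [tensorFrame, tensorFrame, sum_inner]
  simp only [inner_sum, inner_outerSelf, inner_tensorPow, norm_pow, ← pow_mul, mul_comm t 2]
  norm_cast

variable [DecidableEq α]

variable (α) in
/-- The matrix of the permutation operator of `σ` on `(ℂ^α)^{⊗t}`, in the encoding of
`outerSelf`. -/
noncomputable def permVec {t : ℕ} (σ : Perm (Fin t)) :
    EuclideanSpace ℂ ((Fin t → α) × (Fin t → α)) :=
  ∑ b, EuclideanSpace.single (b ∘ σ, b) 1

theorem inner_permVec_outerSelf_tensorPow {t : ℕ} (σ : Perm (Fin t)) (x : EuclideanSpace ℂ α) :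
    ⟪permVec α σ, outerSelf (tensorPow t x)⟫_ℂ = (‖x‖ ^ (2 * t) : ℝ) := by
  calc ⟪permVec α σ, outerSelf (tensorPow t x)⟫_ℂ = ⟪tensorPow t x, tensorPow t x⟫_ℂ := by
        rw [permVec, sum_inner, PiLp.inner_apply]
        simp only [EuclideanSpace.inner_single_left, outerSelf, tensorPow_apply_comp_perm, map_one,
          one_mul, RCLike.inner_apply]
    _ = _ := by
        rw [inner_tensorPow, inner_self_eq_norm_sq_to_K, ← pow_mul]
        norm_cast

theorem inner_permVec_permVec {t : ℕ} (σ τ : Perm (Fin t)) :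
    ⟪permVec α σ, permVec α τ⟫_ℂ = #{b : Fin t → α | b ∘ σ = b ∘ τ} := by
  simp only [permVec, sum_inner, inner_sum, EuclideanSpace.inner_single_left, PiLp.single_apply,
    map_one, one_mul, Prod.mk.injEq]
  rw [card_filter, Nat.cast_sum]
  refine sum_congr rfl fun c _ => ?_
  rw [sum_eq_single c (fun b _ hb => if_neg fun h => hb h.2) (by simp)]
  simp

variable (α) in
noncomputable def symmetrizer (t : ℕ) : EuclideanSpace ℂ ((Fin t → α) × (Fin t → α)) :=
  (t ! : ℂ)⁻¹ • ∑ σ : Perm (Fin t), permVec α σ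

theorem inner_symmetrizer_outerSelf_tensorPow (t : ℕ) (x : EuclideanSpace ℂ α) :
    ⟪symmetrizer α t, outerSelf (tensorPow t x)⟫_ℂ = (‖x‖ ^ (2 * t) : ℝ) := by
  rw [symmetrizer, inner_smul_left, sum_inner]
  simp only [inner_permVec_outerSelf_tensorPow, sum_const, card_univ, Fintype.card_perm,
    Fintype.card_fin, nsmul_eq_mul, map_inv₀, map_natCast]
  exact inv_mul_cancel_left₀ (by exact_mod_cast t.factorial_ne_zero) _

variable (α) in
theorem inner_symmetrizer_self (t : ℕ) :
    ⟪symmetrizer α t, symmetrizer α t⟫_ℂ = Nat.multichoose (Fintype.card α) t := by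
  rw [symmetrizer, inner_smul_left, inner_smul_right, sum_inner]
  simp only [inner_sum, inner_permVec_permVec, map_inv₀, map_natCast]
  simp_rw [← Nat.cast_sum]
  rw [sum_sum_card_comp_eq_comp]
  push_cast
  have ht : (t ! : ℂ) ≠ 0 := by exact_mod_cast t.factorial_ne_zero
  rw [inv_mul_cancel_left₀ ht, inv_mul_cancel_left₀ ht]

theorem inner_symmetrizer_tensorFrame {ι : Type*} [Fintype ι] (t : ℕ)
    (x : ι → EuclideanSpace ℂ α) :
    ⟪symmetrizer α t, tensorFrame t x⟫_ℂ = (∑ i, ‖x i‖ ^ (2 * t) : ℝ) := by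
  simp only [tensorFrame, inner_sum, inner_symmetrizer_outerSelf_tensorPow]
  norm_cast

end TensorPowers

theorem designConst_eq_inv_multichoose (d t : ℕ) :
    designConst d t = (Nat.multichoose d t : ℝ)⁻¹ := by
  rw [designConst, Nat.multichoose_eq, add_comm d t, one_div]

theorem IsSphericalDesign.tensorFrame_eq {d t : ℕ} {ι : Type*} [Fintype ι]
    {x : ι → EuclideanSpace ℂ (Fin d)} (hX : IsSphericalDesign d t x) :
    tensorFrame t x =
      (((∑ i, ‖x i‖ ^ (2 * t)) * designConst d t : ℝ) : ℂ) • symmetrizer (Fin d) t := by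
  rw [designConst_eq_inv_multichoose, ← div_eq_mul_inv]
  refine eq_smul_of_inner_self_eq_sq_div ?_ (inner_symmetrizer_tensorFrame t x) ?_
  · rw [inner_symmetrizer_self, Fintype.card_fin]
    norm_cast
  · rw [inner_tensorFrame, hX, designConst_eq_inv_multichoose, div_eq_inv_mul]
    norm_cast

theorem cross_correlation_of_spherical_designs_general (d t : ℕ)
    {ι κ : Type*} [Fintype ι] [Fintype κ]
    (x : ι → EuclideanSpace ℂ (Fin d)) (y : κ → EuclideanSpace ℂ (Fin d))
    (hX : IsSphericalDesign d t x) :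
    ∑ i, ∑ j, ‖(inner ℂ (x i) (y j) : ℂ)‖ ^ (2 * t) =
      designConst d t * (∑ i, ‖x i‖ ^ (2 * t)) * (∑ j, ‖y j‖ ^ (2 * t)) := by
  have key : ((∑ i, ∑ j, ‖⟪x i, y j⟫_ℂ‖ ^ (2 * t) : ℝ) : ℂ) =
      ((designConst d t * (∑ i, ‖x i‖ ^ (2 * t)) * (∑ j, ‖y j‖ ^ (2 * t)) : ℝ) : ℂ) := by
    rw [← inner_tensorFrame, hX.tensorFrame_eq, inner_smul_left, inner_symmetrizer_tensorFrame,
      Complex.conj_ofReal]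
    push_cast
    ring
  exact_mod_cast key

/-- The cross-correlation identity for two spherical `(t,t)`-designs:
`∑ i ∑ j |⟨x i, y j⟩|^(2t) = c_t(ℂ^d) (∑ i ‖x i‖^(2t)) (∑ j ‖y j‖^(2t))`. -/
theorem cross_correlation_of_spherical_designs (d t : ℕ) (hd : 1 ≤ d) (ht : 1 ≤ t)
    {ι κ : Type*} [Fintype ι] [Fintype κ]
    (x : ι → EuclideanSpace ℂ (Fin d)) (y : κ → EuclideanSpace ℂ (Fin d))
    (hx : ∀ i, x i ≠ 0) (hy : ∀ j, y j ≠ 0)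
    (hX : IsSphericalDesign d t x) (hY : IsSphericalDesign d t y) :
    ∑ i, ∑ j, ‖(inner ℂ (x i) (y j) : ℂ)‖ ^ (2 * t) =
      designConst d t * (∑ i, ‖x i‖ ^ (2 * t)) * (∑ j, ‖y j‖ ^ (2 * t)) :=
  cross_correlation_of_spherical_designs_general d t x y hX
end

section
/- Let d ≥ 1 and t ≥ 1 be integers, and let (X, w^X) = ((x_i), (w_i^X))_{i∈I} and (Y, w^Y) = ((y_j), (w_j^Y))_{j∈J} be weighted spherical (t,t)-designs for ℂ^d. Then for every real number α, the disjoint union X ∪ Y equipped with the affine combination of weights (α·w_i^X on X and (1−α)·w_j^Y on Y) is again a weighted spherical (t,t)-design: the weights sum to 1 and the corresponding double sum equals c_t(ℂ^d). -/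
/-!
Write `φ(x)` for `x^{⊗t}` in an orthonormal basis of the `t`-th symmetric power, so that
`⟨φ x, φ y⟩ = ⟨x, y⟩^t`. Then `|⟨x, y⟩|^{2t}` is the Frobenius inner product of the rank-one
matrices `φ(x)φ(x)ᴴ` and `φ(y)φ(y)ᴴ`, and the double sum of a weighted family is `‖F‖²` for its
frame operator `F = ∑ wᵢ φ(xᵢ)φ(xᵢ)ᴴ`. For a design, `‖F‖² = c_t`, `⟨c_t I, F⟩ = c_t ∑ wᵢ = c_t`
and `‖c_t I‖² = c_t² dim Sym^t = c_t`, so `‖F - c_t I‖² = 0`: every design has frame operator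
`c_t I`. The frame operator is linear in the weights, so the affine combination of two designs
again has frame operator `c_t I`, and its double sum is `‖c_t I‖² = c_t`.
-/

open scoped BigOperators

/-- A weighted spherical `(t,t)`-design for `ℂ^d`: a finite family of unit vectors
with real weights summing to `1` satisfying the variational characterisation. -/
def IsWeightedDesign (d t : ℕ) {ι : Type*} [Fintype ι]
    (x : ι → EuclideanSpace ℂ (Fin d)) (w : ι → ℝ) : Prop :=
  (∀ i, ‖x i‖ = 1) ∧ (∑ i, w i = 1) ∧
    ∑ i, ∑ j, w i * w j * ‖(inner ℂ (x i) (x j) : ℂ)‖ ^ (2 * t) = designConst d t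

open Finset RCLike
open scoped ComplexConjugate InnerProductSpace

theorem eq_of_norm_sq_eq_of_re_inner_eq {𝕜 E : Type*} [RCLike 𝕜] [NormedAddCommGroup E]
    [InnerProductSpace 𝕜 E] {u v : E} {c : ℝ} (hu : ‖u‖ ^ 2 = c) (hv : ‖v‖ ^ 2 = c)
    (huv : re ⟪v, u⟫_𝕜 = c) : u = v := by
  have h : ‖u - v‖ ^ 2 = 0 := by
    rw [@norm_sub_sq 𝕜, inner_re_symm, hu, hv, huv]
    ring
  simpa [sub_eq_zero] using h

section Frame

variable {𝕜 : Type*} [RCLike 𝕜]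

section Outer

variable {S : Type*} [Fintype S]

/-- The rank-one matrix `u uᴴ`, flattened so that the Frobenius inner product becomes the
Euclidean one. -/
noncomputable def outerVec (u : EuclideanSpace 𝕜 S) : EuclideanSpace 𝕜 (S × S) :=
  WithLp.toLp 2 fun p => u p.1 * conj (u p.2)

variable (𝕜 S) in
noncomputable def idVec [DecidableEq S] : EuclideanSpace 𝕜 (S × S) :=
  WithLp.toLp 2 fun p => if p.1 = p.2 then 1 else 0

theorem inner_outerVec (u v : EuclideanSpace 𝕜 S) :
    ⟪outerVec u, outerVec v⟫_𝕜 = ((‖⟪u, v⟫_𝕜‖ ^ 2 : ℝ) : 𝕜) := by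
  rw [ofReal_pow, ← mul_conj, PiLp.inner_apply, Fintype.sum_prod_type, PiLp.inner_apply,
    map_sum, sum_mul_sum]
  refine sum_congr rfl fun m _ => sum_congr rfl fun m' _ => ?_
  simp only [outerVec, PiLp.toLp_apply, inner_apply, map_mul, conj_conj]
  ring

theorem inner_idVec_outerVec [DecidableEq S] (u : EuclideanSpace 𝕜 S) :
    ⟪idVec 𝕜 S, outerVec u⟫_𝕜 = ((‖u‖ ^ 2 : ℝ) : 𝕜) := by
  rw [ofReal_pow, ← inner_self_eq_norm_sq_to_K, PiLp.inner_apply, Fintype.sum_prod_type,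
    PiLp.inner_apply]
  refine sum_congr rfl fun m _ => ?_
  simp [idVec, outerVec, inner_apply, mul_conj]

theorem norm_idVec_sq [DecidableEq S] : ‖idVec 𝕜 S‖ ^ 2 = Fintype.card S := by
  rw [EuclideanSpace.norm_eq, Real.sq_sqrt (by positivity), Fintype.sum_prod_type]
  simp [idVec, apply_ite]

end Outer

variable {n : Type*} [DecidableEq n]

/-- The coordinates `√(t! / m!) x^m` of `x^{⊗t}` in the orthonormal monomial basis of the
`t`-th symmetric power, indexed by multisets `m` of size `t`. -/
noncomputable def symPowVec (t : ℕ) (x : EuclideanSpace 𝕜 n) : EuclideanSpace 𝕜 (Sym n t) :=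
  WithLp.toLp 2 fun m => (√(m.val.countPerms : ℝ) : 𝕜) * (m.val.map x).prod

/-- The frame operator `∑ᵢ wᵢ (xᵢ^{⊗t})(xᵢ^{⊗t})ᴴ` of a weighted family of vectors. -/
noncomputable def designFrame (t : ℕ) {ι : Type*} [Fintype ι] (x : ι → EuclideanSpace 𝕜 n)
    (w : ι → ℝ) : EuclideanSpace 𝕜 (Sym n t × Sym n t) :=
  ∑ i, (w i : 𝕜) • outerVec (symPowVec t (x i))

variable {t : ℕ} {ι κ : Type*} [Fintype ι] [Fintype κ]

theorem designFrame_sum_elim (x : ι → EuclideanSpace 𝕜 n) (w : ι → ℝ)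
    (y : κ → EuclideanSpace 𝕜 n) (v : κ → ℝ) :
    designFrame t (Sum.elim x y) (Sum.elim w v) = designFrame t x w + designFrame t y v :=
  Fintype.sum_sum_type _

theorem designFrame_const_mul (x : ι → EuclideanSpace 𝕜 n) (w : ι → ℝ) (a : ℝ) :
    designFrame t x (fun i => a * w i) = (a : 𝕜) • designFrame t x w := by
  simp only [designFrame, smul_sum, ofReal_mul, mul_smul]

variable [Fintype n]

theorem inner_symPowVec (t : ℕ) (x y : EuclideanSpace 𝕜 n) :
    ⟪symPowVec t x, symPowVec t y⟫_𝕜 = ⟪x, y⟫_𝕜 ^ t := by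
  rw [PiLp.inner_apply, PiLp.inner_apply, sum_pow, sym_univ]
  refine sum_congr rfl fun m _ => ?_
  have hsqrt : (√(m.val.countPerms : ℝ) : 𝕜) * √(m.val.countPerms : ℝ) = m.val.countPerms := by
    rw [← ofReal_mul, Real.mul_self_sqrt (Nat.cast_nonneg _), ofReal_natCast]
  simp only [symPowVec, PiLp.toLp_apply, inner_apply, map_mul, conj_ofReal, map_multiset_prod,
    Multiset.map_map, Function.comp_def, Multiset.prod_map_mul]
  linear_combination (m.val.map y).prod * (m.val.map fun k => conj (x k)).prod * hsqrt

theorem norm_symPowVec (t : ℕ) (x : EuclideanSpace 𝕜 n) : ‖symPowVec t x‖ = ‖x‖ ^ t := by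
  have h := inner_symPowVec t x x
  rw [inner_self_eq_norm_sq_to_K, inner_self_eq_norm_sq_to_K, ← pow_mul, mul_comm, pow_mul,
    ← ofReal_pow, ← ofReal_pow, ← ofReal_pow, ofReal_inj] at h
  exact (pow_left_inj₀ (norm_nonneg _) (by positivity) two_ne_zero).1 h

theorem sum_sum_mul_norm_inner_pow_eq_norm_designFrame_sq (x : ι → EuclideanSpace 𝕜 n)
    (w : ι → ℝ) :
    ∑ i, ∑ j, w i * w j * ‖⟪x i, x j⟫_𝕜‖ ^ (2 * t) = ‖designFrame t x w‖ ^ 2 := by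
  rw [@norm_sq_eq_re_inner 𝕜, designFrame, sum_inner, map_sum]
  refine sum_congr rfl fun i _ => ?_
  rw [inner_sum, map_sum]
  refine sum_congr rfl fun j _ => ?_
  rw [inner_smul_left, inner_smul_right, inner_outerVec, inner_symPowVec, norm_pow, ← pow_mul,
    conj_ofReal, ← ofReal_mul, ← ofReal_mul, ofReal_re, mul_comm 2 t, mul_assoc]

theorem inner_idVec_designFrame (x : ι → EuclideanSpace 𝕜 n) (w : ι → ℝ) :
    ⟪idVec 𝕜 (Sym n t), designFrame t x w⟫_𝕜 = ((∑ i, w i * ‖x i‖ ^ (2 * t) : ℝ) : 𝕜) := by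
  rw [designFrame, inner_sum, ofReal_sum]
  refine sum_congr rfl fun i _ => ?_
  rw [inner_smul_right, inner_idVec_outerVec, norm_symPowVec, ← pow_mul, ofReal_mul, mul_comm t 2]

end Frame

theorem norm_designConst_smul_idVec_sq (d t : ℕ) :
    ‖(designConst d t : ℂ) • idVec ℂ (Sym (Fin d) t)‖ ^ 2 = designConst d t := by
  rw [norm_smul, mul_pow, norm_idVec_sq, Sym.card_sym_eq_choose, Fintype.card_fin, add_comm d,
    Complex.norm_real, Real.norm_eq_abs, sq_abs, designConst]
  rcases eq_or_ne ((t + d - 1).choose t : ℝ) 0 with h | h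
  · simp [h]
  · field_simp

theorem IsWeightedDesign.designFrame_eq {d t : ℕ} {ι : Type*} [Fintype ι]
    {x : ι → EuclideanSpace ℂ (Fin d)} {w : ι → ℝ} (h : IsWeightedDesign d t x w) :
    designFrame t x w = (designConst d t : ℂ) • idVec ℂ (Sym (Fin d) t) := by
  obtain ⟨hx, hw, hsum⟩ := h
  refine eq_of_norm_sq_eq_of_re_inner_eq (𝕜 := ℂ) ?_ (norm_designConst_smul_idVec_sq d t) ?_
  · rw [← sum_sum_mul_norm_inner_pow_eq_norm_designFrame_sq, hsum]
  · rw [inner_smul_left, inner_idVec_designFrame]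
    simp [hx, hw]

theorem affine_union_of_weighted_designs_general (d t : ℕ)
    {ι κ : Type*} [Fintype ι] [Fintype κ]
    (x : ι → EuclideanSpace ℂ (Fin d)) (wX : ι → ℝ)
    (y : κ → EuclideanSpace ℂ (Fin d)) (wY : κ → ℝ)
    (hX : IsWeightedDesign d t x wX) (hY : IsWeightedDesign d t y wY) (α : ℝ) :
    IsWeightedDesign d t (Sum.elim x y)
      (Sum.elim (fun i => α * wX i) (fun j => (1 - α) * wY j)) := by
  have hframe : designFrame t (Sum.elim x y)
      (Sum.elim (fun i => α * wX i) (fun j => (1 - α) * wY j)) =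
      (designConst d t : ℂ) • idVec ℂ (Sym (Fin d) t) := by
    rw [designFrame_sum_elim, designFrame_const_mul, designFrame_const_mul, hX.designFrame_eq,
      hY.designFrame_eq, ← add_smul, ← ofReal_add, add_sub_cancel, ofReal_one, one_smul]
  refine ⟨Sum.forall.2 ⟨hX.1, hY.1⟩, ?_, ?_⟩
  · simp [Fintype.sum_sum_type, ← mul_sum, hX.2.1, hY.2.1]
  · rw [sum_sum_mul_norm_inner_pow_eq_norm_designFrame_sq, hframe,
      norm_designConst_smul_idVec_sq]

/-- The disjoint union of two weighted spherical `(t,t)`-designs, with any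
affine combination `(α, 1-α)` of the weights, is again a weighted spherical
`(t,t)`-design. -/
theorem affine_union_of_weighted_designs (d t : ℕ) (hd : 1 ≤ d) (ht : 1 ≤ t)
    {ι κ : Type*} [Fintype ι] [Fintype κ]
    (x : ι → EuclideanSpace ℂ (Fin d)) (wX : ι → ℝ)
    (y : κ → EuclideanSpace ℂ (Fin d)) (wY : κ → ℝ)
    (hX : IsWeightedDesign d t x wX) (hY : IsWeightedDesign d t y wY) (α : ℝ) :
    IsWeightedDesign d t (Sum.elim x y)
      (Sum.elim (fun i => α * wX i) (fun j => (1 - α) * wY j)) :=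
  affine_union_of_weighted_designs_general d t x wX y wY hX hY α
end

section
/- Let d ≥ 1 and t ≥ 1 be integers. Let (x_i)_{i∈I} and (y_j)_{j∈J} be finite families of unit vectors in ℂ^d with real weights (w_i^X) and (w_j^Y) each summing to 1, and set b_{XX} := ∑_{i,i'} w_i^X w_{i'}^X |⟨x_i,x_{i'}⟩|^{2t}, b_{YY} := ∑_{j,j'} w_j^Y w_{j'}^Y |⟨y_j,y_{j'}⟩|^{2t}, b_{XY} := ∑_{i,j} w_i^X w_j^Y |⟨x_i,y_j⟩|^{2t}. Suppose b_{XX}·b_{YY} − b_{XY}² = c_t(ℂ^d)·(b_{XX} + b_{YY} − 2b_{XY}) and b_{XX} + b_{YY} − 2b_{XY} ≠ 0. Then α := (b_{YY} − b_{XY}) / (b_{XX} + b_{YY} − 2b_{XY}) is the unique real number for which the disjoint union X ∪ Y with weights α·w_i^X on X and (1−α)·w_j^Y on Y is a weighted spherical (t,t)-design. -/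
/-! The design condition for the mixture with weights `β w^X`, `(1 - β) w^Y` is the quadratic
equation `β² b_XX + 2β(1-β) b_XY + (1-β)² b_YY = c_t(ℂ^d)` in `β`, whose leading coefficient is
`b_XX + b_YY - 2 b_XY` and whose discriminant is `4 (b_XY² - b_XX b_YY + c_t (b_XX + b_YY - 2 b_XY))`.
When that discriminant vanishes, the equation has exactly one root. -/

open scoped BigOperators

open Finset

theorem mixture_eq_iff_of_discrim_eq_zero {a b m c : ℝ} (hne : a + b - 2 * m ≠ 0)
    (hdisc : a * b - m ^ 2 = c * (a + b - 2 * m)) (β : ℝ) :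
    β ^ 2 * a + 2 * β * (1 - β) * m + (1 - β) ^ 2 * b = c ↔ β = (b - m) / (a + b - 2 * m) := by
  have hquad := quadratic_eq_zero_iff_of_discrim_eq_zero hne
    (b := -2 * (b - m)) (c := b - c) (by rw [discrim]; linear_combination -4 * hdisc) β
  rw [show -(-2 * (b - m)) / (2 * (a + b - 2 * m)) = (b - m) / (a + b - 2 * m) by
    field_simp] at hquad
  rw [← hquad]
  constructor <;> intro h <;> linear_combination h

section CrossPotential

variable (𝕜 : Type*) {E : Type*} [RCLike 𝕜] [NormedAddCommGroup E] [InnerProductSpace 𝕜 E]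
  {ι κ : Type*} [Fintype ι] [Fintype κ]

/-- `b_XX`, `b_YY` and `b_XY` are instances of this with `n = 2t`. -/
noncomputable def crossPotential (n : ℕ) (x : ι → E) (u : ι → ℝ) (y : κ → E) (v : κ → ℝ) : ℝ :=
  ∑ i, ∑ j, u i * v j * ‖(inner 𝕜 (x i) (y j) : 𝕜)‖ ^ n

variable {𝕜}

theorem crossPotential_comm (n : ℕ) (x : ι → E) (u : ι → ℝ) (y : κ → E) (v : κ → ℝ) :
    crossPotential 𝕜 n y v x u = crossPotential 𝕜 n x u y v := by
  rw [crossPotential, crossPotential, Finset.sum_comm]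
  refine sum_congr rfl fun i _ => sum_congr rfl fun j _ => ?_
  rw [← inner_conj_symm, RCLike.norm_conj, mul_comm (v j)]

theorem crossPotential_mul_weights (n : ℕ) (x : ι → E) (u : ι → ℝ) (y : κ → E) (v : κ → ℝ)
    (a b : ℝ) :
    crossPotential 𝕜 n x (fun i => a * u i) y (fun j => b * v j) =
      a * b * crossPotential 𝕜 n x u y v := by
  simp only [crossPotential, mul_sum]
  exact sum_congr rfl fun i _ => sum_congr rfl fun j _ => by ring

theorem crossPotential_sumElim_self (n : ℕ) (x : ι → E) (u : ι → ℝ) (y : κ → E) (v : κ → ℝ) :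
    crossPotential 𝕜 n (Sum.elim x y) (Sum.elim u v) (Sum.elim x y) (Sum.elim u v) =
      crossPotential 𝕜 n x u x u + 2 * crossPotential 𝕜 n x u y v +
        crossPotential 𝕜 n y v y v := by
  have hsplit := crossPotential_comm (𝕜 := 𝕜) n x u y v
  simp only [crossPotential, Fintype.sum_sum_type, Sum.elim_inl, Sum.elim_inr,
    sum_add_distrib] at hsplit ⊢
  rw [hsplit]
  ring

theorem crossPotential_mixture (n : ℕ) (x : ι → E) (u : ι → ℝ) (y : κ → E) (v : κ → ℝ)
    (β : ℝ) :
    crossPotential 𝕜 n (Sum.elim x y) (Sum.elim (fun i => β * u i) fun j => (1 - β) * v j)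
        (Sum.elim x y) (Sum.elim (fun i => β * u i) fun j => (1 - β) * v j) =
      β ^ 2 * crossPotential 𝕜 n x u x u + 2 * β * (1 - β) * crossPotential 𝕜 n x u y v +
        (1 - β) ^ 2 * crossPotential 𝕜 n y v y v := by
  rw [crossPotential_sumElim_self, crossPotential_mul_weights, crossPotential_mul_weights,
    crossPotential_mul_weights]
  ring

end CrossPotential

theorem isWeightedDesign_mixture_iff {d t : ℕ} {ι κ : Type*} [Fintype ι] [Fintype κ]
    {x : ι → EuclideanSpace ℂ (Fin d)} {wX : ι → ℝ} {y : κ → EuclideanSpace ℂ (Fin d)}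
    {wY : κ → ℝ} (hx : ∀ i, ‖x i‖ = 1) (hy : ∀ j, ‖y j‖ = 1)
    (hwX : ∑ i, wX i = 1) (hwY : ∑ j, wY j = 1) (β : ℝ) :
    IsWeightedDesign d t (Sum.elim x y)
        (Sum.elim (fun i => β * wX i) fun j => (1 - β) * wY j) ↔
      β ^ 2 * crossPotential ℂ (2 * t) x wX x wX +
          2 * β * (1 - β) * crossPotential ℂ (2 * t) x wX y wY +
          (1 - β) ^ 2 * crossPotential ℂ (2 * t) y wY y wY = designConst d t := by
  have hnorm : ∀ p, ‖Sum.elim x y p‖ = 1 := Sum.rec hx hy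
  have hsum : ∑ p, Sum.elim (fun i => β * wX i) (fun j => (1 - β) * wY j) p = 1 := by
    simp only [Fintype.sum_sum_type, Sum.elim_inl, Sum.elim_inr]
    rw [← mul_sum, ← mul_sum, hwX, hwY]
    ring
  rw [← crossPotential_mixture]
  exact ⟨fun h => h.2.2, fun h => ⟨hnorm, hsum, h⟩⟩

theorem unique_weighting_of_zero_discriminant_general (d t : ℕ)
    {ι κ : Type*} [Fintype ι] [Fintype κ]
    (x : ι → EuclideanSpace ℂ (Fin d)) (wX : ι → ℝ)
    (y : κ → EuclideanSpace ℂ (Fin d)) (wY : κ → ℝ)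
    (hx : ∀ i, ‖x i‖ = 1) (hy : ∀ j, ‖y j‖ = 1)
    (hwX : ∑ i, wX i = 1) (hwY : ∑ j, wY j = 1)
    (bXX bYY bXY : ℝ)
    (hbXX : bXX = ∑ i, ∑ i', wX i * wX i' * ‖(inner ℂ (x i) (x i') : ℂ)‖ ^ (2 * t))
    (hbYY : bYY = ∑ j, ∑ j', wY j * wY j' * ‖(inner ℂ (y j) (y j') : ℂ)‖ ^ (2 * t))
    (hbXY : bXY = ∑ i, ∑ j, wX i * wY j * ‖(inner ℂ (x i) (y j) : ℂ)‖ ^ (2 * t))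
    (hdisc : bXX * bYY - bXY ^ 2 = designConst d t * (bXX + bYY - 2 * bXY))
    (hne : bXX + bYY - 2 * bXY ≠ 0) :
    IsWeightedDesign d t (Sum.elim x y)
        (Sum.elim (fun i => (bYY - bXY) / (bXX + bYY - 2 * bXY) * wX i)
          (fun j => (1 - (bYY - bXY) / (bXX + bYY - 2 * bXY)) * wY j)) ∧
      ∀ β : ℝ,
        IsWeightedDesign d t (Sum.elim x y)
            (Sum.elim (fun i => β * wX i) (fun j => (1 - β) * wY j)) →
          β = (bYY - bXY) / (bXX + bYY - 2 * bXY) := by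
  have hdesign : ∀ β : ℝ, IsWeightedDesign d t (Sum.elim x y)
      (Sum.elim (fun i => β * wX i) fun j => (1 - β) * wY j) ↔
        β = (bYY - bXY) / (bXX + bYY - 2 * bXY) := fun β => by
    rw [isWeightedDesign_mixture_iff hx hy hwX hwY, crossPotential, crossPotential,
      crossPotential, ← hbXX, ← hbYY, ← hbXY]
    exact mixture_eq_iff_of_discrim_eq_zero hne hdisc β
  exact ⟨(hdesign _).2 rfl, fun β => (hdesign β).1⟩

/-- If the discriminant of the quadratic vanishes, i.e.
`b_XX b_YY - b_XY² = c_t(ℂ^d) (b_XX + b_YY - 2 b_XY)` with `b_XX + b_YY - 2 b_XY ≠ 0`,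
then `α = (b_YY - b_XY)/(b_XX + b_YY - 2 b_XY)` is the unique weighting for which the
disjoint union is a weighted spherical `(t,t)`-design. -/
theorem unique_weighting_of_zero_discriminant (d t : ℕ) (hd : 1 ≤ d) (ht : 1 ≤ t)
    {ι κ : Type*} [Fintype ι] [Fintype κ]
    (x : ι → EuclideanSpace ℂ (Fin d)) (wX : ι → ℝ)
    (y : κ → EuclideanSpace ℂ (Fin d)) (wY : κ → ℝ)
    (hx : ∀ i, ‖x i‖ = 1) (hy : ∀ j, ‖y j‖ = 1)
    (hwX : ∑ i, wX i = 1) (hwY : ∑ j, wY j = 1)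
    (bXX bYY bXY : ℝ)
    (hbXX : bXX = ∑ i, ∑ i', wX i * wX i' * ‖(inner ℂ (x i) (x i') : ℂ)‖ ^ (2 * t))
    (hbYY : bYY = ∑ j, ∑ j', wY j * wY j' * ‖(inner ℂ (y j) (y j') : ℂ)‖ ^ (2 * t))
    (hbXY : bXY = ∑ i, ∑ j, wX i * wY j * ‖(inner ℂ (x i) (y j) : ℂ)‖ ^ (2 * t))
    (hdisc : bXX * bYY - bXY ^ 2 = designConst d t * (bXX + bYY - 2 * bXY))
    (hne : bXX + bYY - 2 * bXY ≠ 0) :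
    IsWeightedDesign d t (Sum.elim x y)
        (Sum.elim (fun i => (bYY - bXY) / (bXX + bYY - 2 * bXY) * wX i)
          (fun j => (1 - (bYY - bXY) / (bXX + bYY - 2 * bXY)) * wY j)) ∧
      ∀ β : ℝ,
        IsWeightedDesign d t (Sum.elim x y)
            (Sum.elim (fun i => β * wX i) (fun j => (1 - β) * wY j)) →
          β = (bYY - bXY) / (bXX + bYY - 2 * bXY) :=
  unique_weighting_of_zero_discriminant_general d t x wX y wY hx hy hwX hwY bXX bYY bXY hbXX hbYY
    hbXY hdisc hne
end

section
/- Let G be a finite group acting on ℂ^d by a unitary representation ρ, let t ≥ 1, and define p_G^{(t)}(x,y) := (1/|G|) ∑_{g∈G} |⟨x, ρ(g)y⟩|^{2t} and f_G^{(t)}(x,y) := p_G^{(t)}(x,x)·p_G^{(t)}(y,y) − (p_G^{(t)}(x,y))². Let x, y ∈ ℂ^d be nonzero, write x̂ = x/‖x‖, ŷ = y/‖y‖, and suppose f_G^{(t)}(x̂,ŷ) ≠ 0 and f_G^{(t)}(x̂,ŷ) = c_t(ℂ^d)·(p_G^{(t)}(x̂,x̂) + p_G^{(t)}(ŷ,ŷ)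 − 2·p_G^{(t)}(x̂,ŷ)). Then there exists a unique real number α such that α²·p_G^{(t)}(x̂,x̂) + (1−α)²·p_G^{(t)}(ŷ,ŷ) + 2α(1−α)·p_G^{(t)}(x̂,ŷ) = c_t(ℂ^d); equivalently, the union of the orbits of x̂ and ŷ, with constant weight α/|G| on each point of the orbit of x̂ and constant weight (1−α)/|G| on each point of the orbit of ŷ, is a weighted spherical (t,t)-design for a unique α. -/
open scoped BigOperators

theorem mul_weighted_quadratic_eq_sq_add (a b c α : ℝ) :
    (a + b - 2 * c) * (α ^ 2 * a + (1 - α) ^ 2 * b + 2 * α * (1 - α) * c) =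
      (α * (a + b - 2 * c) - (b - c)) ^ 2 + (a * b - c ^ 2) := by
  ring

/-- With `S = a + b - 2 * c` and `q α` the left-hand side, `hdisc` turns `S * (q α - K)` into
the perfect square `(α * S - (b - c)) ^ 2`, and `hne` forces `S ≠ 0`. -/
theorem existsUnique_weighted_quadratic_eq {a b c K : ℝ} (hne : a * b - c ^ 2 ≠ 0)
    (hdisc : a * b - c ^ 2 = K * (a + b - 2 * c)) :
    ∃! α : ℝ, α ^ 2 * a + (1 - α) ^ 2 * b + 2 * α * (1 - α) * c = K := by
  set S := a + b - 2 * c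
  have hS : S ≠ 0 := fun h => hne (by rw [hdisc, h, mul_zero])
  have key : ∀ α : ℝ, α ^ 2 * a + (1 - α) ^ 2 * b + 2 * α * (1 - α) * c = K ↔
      α = (b - c) / S := fun α =>
    calc _ ↔ S * (α ^ 2 * a + (1 - α) ^ 2 * b + 2 * α * (1 - α) * c) = S * K :=
          (mul_right_inj' hS).symm
      _ ↔ (α * S - (b - c)) ^ 2 = 0 := by
          rw [mul_weighted_quadratic_eq_sq_add, hdisc, mul_comm S K, add_eq_right]
      _ ↔ α = (b - c) / S := by rw [sq_eq_zero_iff, sub_eq_zero, eq_div_iff hS]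
  exact ⟨(b - c) / S, (key _).2 rfl, fun α hα => (key α).1 hα⟩

theorem unique_weighting_for_orbit_pair_general (d t : ℕ)
    (p : EuclideanSpace ℂ (Fin d) → EuclideanSpace ℂ (Fin d) → ℝ)
    (f : EuclideanSpace ℂ (Fin d) → EuclideanSpace ℂ (Fin d) → ℝ)
    (hf : ∀ u v, f u v = p u u * p v v - (p u v) ^ 2)
    (xh yh : EuclideanSpace ℂ (Fin d))
    (hne : f xh yh ≠ 0)
    (hdisc : f xh yh = designConst d t * (p xh xh + p yh yh - 2 * p xh yh)) :
    ∃! α : ℝ,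
      α ^ 2 * p xh xh + (1 - α) ^ 2 * p yh yh + 2 * α * (1 - α) * p xh yh =
        designConst d t := by
  rw [hf] at hne hdisc
  exact existsUnique_weighted_quadratic_eq hne hdisc

/-- Given a unitary representation `ρ` of a finite group `G` on `ℂ^d` and nonzero
vectors `x, y` with unit normalisations `x̂, ŷ`, if `f_G^{(t)}(x̂,ŷ) ≠ 0` and
`f_G^{(t)}(x̂,ŷ) = c_t(ℂ^d)(p(x̂,x̂) + p(ŷ,ŷ) - 2p(x̂,ŷ))`, then there is a unique
`α ∈ ℝ` for which the union of the orbits of `x̂` and `ŷ`, weighted by `α/|G|` and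
`(1-α)/|G|`, is a weighted spherical `(t,t)`-design, i.e. a unique `α` with
`α² p(x̂,x̂) + (1-α)² p(ŷ,ŷ) + 2α(1-α) p(x̂,ŷ) = c_t(ℂ^d)`. -/
theorem unique_weighting_for_orbit_pair (d t : ℕ) (hd : 1 ≤ d) (ht : 1 ≤ t)
    {G : Type*} [Group G] [Fintype G]
    (ρ : G →* (EuclideanSpace ℂ (Fin d) ≃ₗᵢ[ℂ] EuclideanSpace ℂ (Fin d)))
    (p : EuclideanSpace ℂ (Fin d) → EuclideanSpace ℂ (Fin d) → ℝ)
    (hp : ∀ u v, p u v =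
      (1 / (Fintype.card G : ℝ)) * ∑ g : G, ‖(inner ℂ u (ρ g v) : ℂ)‖ ^ (2 * t))
    (f : EuclideanSpace ℂ (Fin d) → EuclideanSpace ℂ (Fin d) → ℝ)
    (hf : ∀ u v, f u v = p u u * p v v - (p u v) ^ 2)
    (x y : EuclideanSpace ℂ (Fin d)) (hx : x ≠ 0) (hy : y ≠ 0)
    (xh yh : EuclideanSpace ℂ (Fin d))
    (hxh : xh = ((‖x‖ : ℂ))⁻¹ • x) (hyh : yh = ((‖y‖ : ℂ))⁻¹ • y)
    (hne : f xh yh ≠ 0)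
    (hdisc : f xh yh = designConst d t * (p xh xh + p yh yh - 2 * p xh yh)) :
    ∃! α : ℝ,
      α ^ 2 * p xh xh + (1 - α) ^ 2 * p yh yh + 2 * α * (1 - α) * p xh yh =
        designConst d t :=
  unique_weighting_for_orbit_pair_general d t p f hf xh yh hne hdisc
end

section
/- Let G be a finite group acting on ℂ^d by a unitary representation ρ, let t ≥ 1, and define p_G^{(t)}(x,y) := (1/|G|) ∑_{g∈G} |⟨x, ρ(g)y⟩|^{2t} and f_G^{(t)}(x,y) := p_G^{(t)}(x,x)·p_G^{(t)}(y,y) − (p_G^{(t)}(x,y))². Then the following are equivalent: (i) f_G^{(t)} is not identically zero, and for all nonzero x, y ∈ ℂ^d with f_G^{(t)}(x,y) ≠ 0 there exists a unique real α such that α²·p_G^{(t)}(x̂,x̂) + (1−α)²·p_G^{(t)}(ŷ,ŷ) + 2α(1−α)·p_G^{(t)}(x̂,ŷ) = c_t(ℂ^d), where x̂ = x/‖x‖ and ŷ = y/‖y‖; (ii) f_G^{(t)} is not identically zero, and for all x, y ∈ ℂ^d, f_G^{(t)}(x,y) = c_t(ℂ^d)·(‖y‖^{4t}·p_G^{(t)}(x,x)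 + ‖x‖^{4t}·p_G^{(t)}(y,y) − 2‖x‖^{2t}‖y‖^{2t}·p_G^{(t)}(x,y)). -/
open scoped ComplexConjugate InnerProductSpace
open Polynomial

namespace TwoOrbits

theorem existsUnique_quadForm_eq_iff {a b c C : ℝ} (hcs : c ^ 2 ≤ a * b)
    (hdet : a * b - c ^ 2 ≠ 0) :
    (∃! α : ℝ, α ^ 2 * a + (1 - α) ^ 2 * b + 2 * α * (1 - α) * c = C) ↔
      a * b - c ^ 2 = C * (a + b - 2 * c) := by
  generalize hA_def : a + b - 2 * c = A
  have hA : A ≠ 0 := by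
    rintro rfl
    obtain rfl : c = (a + b) / 2 := by linarith
    exact hdet (by nlinarith [sq_nonneg (a - b)])
  -- completing the square
  have hkey : ∀ β, A * (β ^ 2 * a + (1 - β) ^ 2 * b + 2 * β * (1 - β) * c - C) =
      (A * β - (b - c)) ^ 2 - (C * A - (a * b - c ^ 2)) := fun β => by
    rw [← hA_def]; ring
  constructor
  · rintro ⟨α, hα, huniq⟩
    -- `β` is the other root, by Vieta
    obtain ⟨β, hβ⟩ : ∃ β, A * β = 2 * (b - c) - A * α := ⟨_, mul_div_cancel₀ _ hA⟩
    have hβα : β = α := huniq β <| sub_eq_zero.1 <| (mul_eq_zero.1 <| by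
      linear_combination hkey β - hkey α + A * hα + (A * β - A * α) * hβ).resolve_left hA
    subst hβα
    linear_combination -(hkey β) + A * hα - (A * β - (b - c)) * hβ / 2
  · intro h
    obtain ⟨α, hα⟩ : ∃ α, A * α = b - c := ⟨_, mul_div_cancel₀ _ hA⟩
    refine ⟨α, sub_eq_zero.1 ((mul_eq_zero.1 ?_).resolve_left hA), fun β hβ => ?_⟩
    · linear_combination hkey α + (A * α - (b - c)) * hα + h
    · have hsq : (A * β - (b - c)) ^ 2 = 0 := by
        linear_combination -(hkey β) + A * hβ - h
      exact mul_left_cancel₀ hA (by linear_combination (pow_eq_zero_iff two_ne_zero).1 hsq - hα)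

section PolyFunctions

variable {R : Type*} [CommRing R]

variable (R) in
noncomputable def polyFunctions : Subalgebra R (R → R) := (aeval (R := R) (id : R → R)).range

theorem mem_polyFunctions_iff {F : R → R} :
    F ∈ polyFunctions R ↔ ∃ P : R[X], ∀ r, P.eval r = F r := by
  simp [polyFunctions, funext_iff]

variable [IsDomain R] [Infinite R]

theorem aeval_id_injective : Function.Injective (aeval (R := R) (id : R → R)) :=
  (injective_iff_map_eq_zero _).2 fun P hP => Polynomial.funext fun r => by
    simpa using congrFun hP r

theorem eq_zero_of_mul_eq_zero_of_mem_polyFunctions {F H : R → R} (hF : F ∈ polyFunctions R)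
    (hH : H ∈ polyFunctions R) (hFH : F * H = 0) (hF0 : F ≠ 0) : H = 0 := by
  obtain ⟨P, rfl⟩ := hF
  obtain ⟨Q, rfl⟩ := hH
  simp only [AlgHom.toRingHom_eq_coe, RingHom.coe_coe] at *
  rw [← map_mul, ← map_zero (aeval (R := R) id), aeval_id_injective.eq_iff] at hFH
  rcases mul_eq_zero.1 hFH with rfl | rfl
  · exact absurd (map_zero _) hF0
  · exact map_zero _

end PolyFunctions

section AlongLines

variable {𝕜 E : Type*} [RCLike 𝕜] [AddCommGroup E] [Module 𝕜 E]

variable (𝕜 E) in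
def polynomialAlongLines : Subalgebra ℝ (E → E → ℝ) where
  carrier := {Φ | ∀ x a y b : E,
    (fun s : ℝ => Φ (x + (s : 𝕜) • a) (y + (s : 𝕜) • b)) ∈ polyFunctions ℝ}
  mul_mem' hΦ hΨ x a y b := mul_mem (hΦ x a y b) (hΨ x a y b)
  add_mem' hΦ hΨ x a y b := add_mem (hΦ x a y b) (hΨ x a y b)
  algebraMap_mem' c _ _ _ _ := algebraMap_mem _ c

/-- On the line through `(x, y)` and a point where `Φ ≠ 0`, the polynomial `Φ * (Ψ₁ - Ψ₂)`
vanishes while `Φ` does not. -/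
theorem eq_of_forall_ne_zero_of_mem {Φ Ψ₁ Ψ₂ : E → E → ℝ}
    (hΦ : Φ ∈ polynomialAlongLines 𝕜 E) (hΨ₁ : Ψ₁ ∈ polynomialAlongLines 𝕜 E)
    (hΨ₂ : Ψ₂ ∈ polynomialAlongLines 𝕜 E) (hex : ∃ u v, Φ u v ≠ 0)
    (hΦΨ : ∀ u v, Φ u v ≠ 0 → Ψ₁ u v = Ψ₂ u v) (x y : E) : Ψ₁ x y = Ψ₂ x y := by
  obtain ⟨u, v, huv⟩ := hex
  have hline := eq_zero_of_mul_eq_zero_of_mem_polyFunctions (hΦ x (u - x) y (v - y))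
    (sub_mem hΨ₁ hΨ₂ x (u - x) y (v - y)) ?_ ?_
  · simpa [sub_eq_zero] using congrFun hline 0
  · funext s
    by_cases h : Φ (x + (s : 𝕜) • (u - x)) (y + (s : 𝕜) • (v - y)) = 0
    · simp [h]
    · simp [hΦΨ _ _ h]
  · intro h
    exact huv (by simpa using congrFun h 1)

theorem swap_mem {Φ : E → E → ℝ} (hΦ : Φ ∈ polynomialAlongLines 𝕜 E) :
    (fun u v => Φ v u) ∈ polynomialAlongLines 𝕜 E :=
  fun x a y b => hΦ y b x a

theorem diag_mem {Φ : E → E → ℝ} (hΦ : Φ ∈ polynomialAlongLines 𝕜 E) :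
    (fun u (_ : E) => Φ u u) ∈ polynomialAlongLines 𝕜 E :=
  fun x a _ _ => hΦ x a x a

end AlongLines

section InnerProduct

variable {𝕜 E : Type*} [RCLike 𝕜] [NormedAddCommGroup E] [InnerProductSpace 𝕜 E]

theorem inner_add_smul_add_smul (x a y b : E) (s : ℝ) :
    ⟪x + (s : 𝕜) • a, y + (s : 𝕜) • b⟫_𝕜 =
      ⟪x, y⟫_𝕜 + (s : 𝕜) * (⟪x, b⟫_𝕜 + ⟪a, y⟫_𝕜) + (s : 𝕜) ^ 2 * ⟪a, b⟫_𝕜 := by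
  simp only [inner_add_left, inner_add_right, inner_smul_left, inner_smul_right,
    RCLike.conj_ofReal]
  ring

theorem re_inner_map_mem (L : E →ₗ[𝕜] E) :
    (fun u v => RCLike.re ⟪u, L v⟫_𝕜) ∈ polynomialAlongLines 𝕜 E := by
  intro x a y b
  refine mem_polyFunctions_iff.2 ⟨C (RCLike.re ⟪x, L y⟫_𝕜) +
    C (RCLike.re (⟪x, L b⟫_𝕜 + ⟪a, L y⟫_𝕜)) * X + C (RCLike.re ⟪a, L b⟫_𝕜) * X ^ 2, fun s => ?_⟩
  dsimp only
  rw [L.map_add, L.map_smul, inner_add_smul_add_smul]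
  simp
  ring

theorem im_inner_map_mem (L : E →ₗ[𝕜] E) :
    (fun u v => RCLike.im ⟪u, L v⟫_𝕜) ∈ polynomialAlongLines 𝕜 E := by
  intro x a y b
  refine mem_polyFunctions_iff.2 ⟨C (RCLike.im ⟪x, L y⟫_𝕜) +
    C (RCLike.im (⟪x, L b⟫_𝕜 + ⟪a, L y⟫_𝕜)) * X + C (RCLike.im ⟪a, L b⟫_𝕜) * X ^ 2, fun s => ?_⟩
  dsimp only
  rw [L.map_add, L.map_smul, inner_add_smul_add_smul]
  simp
  ring

theorem norm_inner_map_pow_mem (L : E →ₗ[𝕜] E) (m : ℕ) :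
    (fun u v => ‖⟪u, L v⟫_𝕜‖ ^ (2 * m)) ∈ polynomialAlongLines 𝕜 E := by
  have h : (fun u v => ‖⟪u, L v⟫_𝕜‖ ^ (2 * m)) =
      ((fun u v => RCLike.re ⟪u, L v⟫_𝕜) * (fun u v => RCLike.re ⟪u, L v⟫_𝕜) +
        (fun u v => RCLike.im ⟪u, L v⟫_𝕜) * (fun u v => RCLike.im ⟪u, L v⟫_𝕜)) ^ m := by
    funext u v
    simp [pow_mul, RCLike.norm_sq_eq_def]
  rw [h]
  exact pow_mem (add_mem (mul_mem (re_inner_map_mem L) (re_inner_map_mem L))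
    (mul_mem (im_inner_map_mem L) (im_inner_map_mem L))) m

theorem norm_pow_mem (m : ℕ) :
    (fun (u : E) (_ : E) => ‖u‖ ^ (2 * m)) ∈ polynomialAlongLines 𝕜 E := by
  have h : (fun (u : E) (_ : E) => ‖u‖ ^ (2 * m)) = (fun u _ => RCLike.re ⟪u, u⟫_𝕜) ^ m := by
    funext u v
    simp [pow_mul]
  rw [h]
  exact pow_mem (diag_mem (re_inner_map_mem LinearMap.id)) m

variable {G : Type*} [Group G] [Fintype G]

theorem inner_sum_orbit_sum_orbit {F : Type*} [NormedAddCommGroup F] [InnerProductSpace 𝕜 F]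
    (ρ : G →* (E ≃ₗᵢ[𝕜] E)) (ψ : E → F)
    (hψ : ∀ g x y, ⟪ψ (ρ g x), ψ (ρ g y)⟫_𝕜 = ⟪ψ x, ψ y⟫_𝕜) (u v : E) :
    ⟪∑ g, ψ (ρ g u), ∑ g, ψ (ρ g v)⟫_𝕜 = Fintype.card G * ∑ g, ⟪ψ u, ψ (ρ g v)⟫_𝕜 := by
  have hshift : ∀ g h, ⟪ψ (ρ g u), ψ (ρ h v)⟫_𝕜 = ⟪ψ u, ψ (ρ (g⁻¹ * h) v)⟫_𝕜 := fun g h =>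
    calc ⟪ψ (ρ g u), ψ (ρ h v)⟫_𝕜 = ⟪ψ (ρ g u), ψ ((ρ g * ρ (g⁻¹ * h)) v)⟫_𝕜 := by
          rw [← map_mul, mul_inv_cancel_left]
      _ = ⟪ψ u, ψ (ρ (g⁻¹ * h) v)⟫_𝕜 := hψ g u _
  simp only [sum_inner, inner_sum, hshift]
  rw [Finset.sum_comm, ← nsmul_eq_mul, ← Finset.card_univ, ← Finset.sum_const]
  exact Finset.sum_congr rfl fun g _ =>
    Equiv.sum_comp (Equiv.mulLeft g⁻¹) fun h => ⟪ψ u, ψ (ρ h v)⟫_𝕜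

theorem norm_sum_inner_orbit_sq_le {F : Type*} [NormedAddCommGroup F] [InnerProductSpace 𝕜 F]
    (ρ : G →* (E ≃ₗᵢ[𝕜] E)) (ψ : E → F)
    (hψ : ∀ g x y, ⟪ψ (ρ g x), ψ (ρ g y)⟫_𝕜 = ⟪ψ x, ψ y⟫_𝕜) (u v : E) :
    ‖∑ g, ⟪ψ u, ψ (ρ g v)⟫_𝕜‖ ^ 2 ≤
      ‖∑ g, ⟪ψ u, ψ (ρ g u)⟫_𝕜‖ * ‖∑ g, ⟪ψ v, ψ (ρ g v)⟫_𝕜‖ := by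
  set A : E → F := fun w => ∑ g, ψ (ρ g w)
  have hcs : ‖⟪A u, A v⟫_𝕜‖ ^ 2 ≤ ‖⟪A u, A u⟫_𝕜‖ * ‖⟪A v, A v⟫_𝕜‖ := by
    have hself : ∀ w : F, ‖⟪w, w⟫_𝕜‖ = ‖w‖ ^ 2 := fun w => by
      rw [inner_self_eq_norm_sq_to_K, norm_pow, RCLike.norm_ofReal, abs_norm]
    rw [hself, hself, ← mul_pow]
    exact pow_le_pow_left₀ (norm_nonneg _) (norm_inner_le_norm _ _) 2
  simp only [A, inner_sum_orbit_sum_orbit ρ ψ hψ, norm_mul, RCLike.norm_natCast] at hcs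
  rw [mul_pow, mul_mul_mul_comm, ← sq] at hcs
  exact le_of_mul_le_mul_left hcs (by positivity)

noncomputable def orbitMoment (ρ : G →* (E ≃ₗᵢ[𝕜] E)) (t : ℕ) (u v : E) : ℝ :=
  (1 / (Fintype.card G : ℝ)) * ∑ g : G, ‖⟪u, ρ g v⟫_𝕜‖ ^ (2 * t)

noncomputable def orbitGap (ρ : G →* (E ≃ₗᵢ[𝕜] E)) (t : ℕ) (u v : E) : ℝ :=
  orbitMoment ρ t u u * orbitMoment ρ t v v - orbitMoment ρ t u v ^ 2

theorem orbitMoment_zero_left (ρ : G →* (E ≃ₗᵢ[𝕜] E)) {t : ℕ} (ht : t ≠ 0) (v : E) :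
    orbitMoment ρ t 0 v = 0 := by
  simp [orbitMoment, ht]

theorem orbitMoment_zero_right (ρ : G →* (E ≃ₗᵢ[𝕜] E)) {t : ℕ} (ht : t ≠ 0) (u : E) :
    orbitMoment ρ t u 0 = 0 := by
  simp [orbitMoment, ht]

variable (ρ : G →* (E ≃ₗᵢ[𝕜] E)) (t : ℕ)

theorem orbitMoment_mem : orbitMoment ρ t ∈ polynomialAlongLines 𝕜 E := by
  have h : orbitMoment ρ t = (1 / (Fintype.card G : ℝ)) •
      ∑ g : G, fun u v => ‖⟪u, (ρ g).toLinearEquiv.toLinearMap v⟫_𝕜‖ ^ (2 * t) := by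
    funext u v
    simp [orbitMoment, Finset.sum_apply]
  rw [h]
  exact Subalgebra.smul_mem _ (sum_mem fun g _ => norm_inner_map_pow_mem _ t) _

theorem orbitGap_mem : orbitGap ρ t ∈ polynomialAlongLines 𝕜 E :=
  sub_mem (mul_mem (diag_mem (orbitMoment_mem ρ t)) (swap_mem (diag_mem (orbitMoment_mem ρ t))))
    (pow_mem (orbitMoment_mem ρ t) 2)

theorem orbitMoment_smul_smul (c c' : 𝕜) (u v : E) :
    orbitMoment ρ t (c • u) (c' • v) = ‖c‖ ^ (2 * t) * ‖c'‖ ^ (2 * t) * orbitMoment ρ t u v := by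
  simp only [orbitMoment, map_smul, inner_smul_left, inner_smul_right, norm_mul,
    RCLike.norm_conj, mul_pow, Finset.mul_sum]
  ring_nf

end InnerProduct

section Euclidean

variable {𝕜 ι : Type*} [RCLike 𝕜] [Fintype ι]

/-- The vector `x^{⊗t} ⊗ x̄^{⊗t}` in coordinates. -/
noncomputable def tensorPowConj (t : ℕ) (x : EuclideanSpace 𝕜 ι) :
    EuclideanSpace 𝕜 ((Fin t → ι) × (Fin t → ι)) :=
  WithLp.toLp 2 fun ij => (∏ k, x (ij.1 k)) * ∏ k, conj (x (ij.2 k))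

theorem inner_tensorPowConj (t : ℕ) (x y : EuclideanSpace 𝕜 ι) :
    ⟪tensorPowConj t x, tensorPowConj t y⟫_𝕜 = ((‖⟪x, y⟫_𝕜‖ ^ (2 * t) : ℝ) : 𝕜) := by
  have hxy : ⟪x, y⟫_𝕜 = ∑ a, conj (x a) * y a := by
    simp [PiLp.inner_apply, mul_comm]
  have hyx : conj ⟪x, y⟫_𝕜 = ∑ a, x a * conj (y a) := by
    simp [hxy, map_sum, mul_comm]
  calc ⟪tensorPowConj t x, tensorPowConj t y⟫_𝕜
      = (∑ a, conj (x a) * y a) ^ t * (∑ a, x a * conj (y a)) ^ t := by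
        simp only [PiLp.inner_apply, RCLike.inner_apply, tensorPowConj, Fintype.sum_prod_type,
          Fintype.sum_pow, Finset.sum_mul_sum, map_mul, map_prod, RCLike.conj_conj,
          Finset.prod_mul_distrib]
        refine Finset.sum_congr rfl fun i _ => Finset.sum_congr rfl fun j _ => ?_
        ring
    _ = (⟪x, y⟫_𝕜 * conj ⟪x, y⟫_𝕜) ^ t := by rw [mul_pow, hyx, hxy]
    _ = ((‖⟪x, y⟫_𝕜‖ ^ (2 * t) : ℝ) : 𝕜) := by
        rw [RCLike.mul_conj, pow_mul]
        push_cast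
        ring

variable {G : Type*} [Group G] [Fintype G]
  (ρ : G →* (EuclideanSpace 𝕜 ι ≃ₗᵢ[𝕜] EuclideanSpace 𝕜 ι)) (t : ℕ)

theorem orbitMoment_sq_le (u v : EuclideanSpace 𝕜 ι) :
    orbitMoment ρ t u v ^ 2 ≤ orbitMoment ρ t u u * orbitMoment ρ t v v := by
  have hsum : ∀ x y, ∑ g, ⟪tensorPowConj t x, tensorPowConj t (ρ g y)⟫_𝕜 =
      ((∑ g, ‖⟪x, ρ g y⟫_𝕜‖ ^ (2 * t) : ℝ) : 𝕜) := by
    simp [inner_tensorPowConj]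
  have hnonneg : ∀ x y, 0 ≤ ∑ g, ‖⟪x, ρ g y⟫_𝕜‖ ^ (2 * t) := fun x y => by positivity
  have h := norm_sum_inner_orbit_sq_le ρ (tensorPowConj t)
    (fun g x y => by simp only [inner_tensorPowConj, LinearIsometryEquiv.inner_map_map]) u v
  simp only [hsum, RCLike.norm_ofReal, abs_of_nonneg (hnonneg _ _)] at h
  simp only [orbitMoment]
  calc _ = (1 / (Fintype.card G : ℝ)) ^ 2 * (∑ g, ‖⟪u, ρ g v⟫_𝕜‖ ^ (2 * t)) ^ 2 := by ring
    _ ≤ (1 / (Fintype.card G : ℝ)) ^ 2 * ((∑ g, ‖⟪u, ρ g u⟫_𝕜‖ ^ (2 * t)) *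
          ∑ g, ‖⟪v, ρ g v⟫_𝕜‖ ^ (2 * t)) := by gcongr
    _ = _ := by ring

theorem existsUnique_weight_iff_orbitGap_eq (C : ℝ) {x y : EuclideanSpace 𝕜 ι} (hx : x ≠ 0)
    (hy : y ≠ 0) (hgap : orbitGap ρ t x y ≠ 0) :
    (∃! α : ℝ,
      α ^ 2 * orbitMoment ρ t ((‖x‖ : 𝕜)⁻¹ • x) ((‖x‖ : 𝕜)⁻¹ • x) +
        (1 - α) ^ 2 * orbitMoment ρ t ((‖y‖ : 𝕜)⁻¹ • y) ((‖y‖ : 𝕜)⁻¹ • y) +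
        2 * α * (1 - α) * orbitMoment ρ t ((‖x‖ : 𝕜)⁻¹ • x) ((‖y‖ : 𝕜)⁻¹ • y) = C) ↔
      orbitGap ρ t x y = C * (‖y‖ ^ (4 * t) * orbitMoment ρ t x x +
        ‖x‖ ^ (4 * t) * orbitMoment ρ t y y -
        2 * ‖x‖ ^ (2 * t) * ‖y‖ ^ (2 * t) * orbitMoment ρ t x y) := by
  have hscale : ∀ u v : EuclideanSpace 𝕜 ι, orbitMoment ρ t ((‖u‖ : 𝕜)⁻¹ • u) ((‖v‖ : 𝕜)⁻¹ • v) =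
      (‖u‖ ^ (2 * t))⁻¹ * (‖v‖ ^ (2 * t))⁻¹ * orbitMoment ρ t u v := fun u v => by
    simp [orbitMoment_smul_smul, inv_pow]
  have hK : ‖x‖ ^ (2 * t) ≠ 0 := pow_ne_zero _ (norm_ne_zero_iff.2 hx)
  have hL : ‖y‖ ^ (2 * t) ≠ 0 := pow_ne_zero _ (norm_ne_zero_iff.2 hy)
  have hcs := orbitMoment_sq_le ρ t ((‖x‖ : 𝕜)⁻¹ • x) ((‖y‖ : 𝕜)⁻¹ • y)
  simp only [hscale] at hcs ⊢
  have h4t : ∀ r : ℝ, r ^ (4 * t) = (r ^ (2 * t)) ^ 2 := fun r => by rw [← pow_mul]; ring_nf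
  rw [h4t, h4t]
  unfold orbitGap at hgap ⊢
  generalize ‖x‖ ^ (2 * t) = K at *
  generalize ‖y‖ ^ (2 * t) = L at *
  generalize orbitMoment ρ t x x = a at *
  generalize orbitMoment ρ t y y = b at *
  generalize orbitMoment ρ t x y = c at *
  have hKL : ((K * L) ^ 2)⁻¹ ≠ 0 := inv_ne_zero (pow_ne_zero _ (mul_ne_zero hK hL))
  have hdet : K⁻¹ * K⁻¹ * a * (L⁻¹ * L⁻¹ * b) - (K⁻¹ * L⁻¹ * c) ^ 2 =
      ((K * L) ^ 2)⁻¹ * (a * b - c ^ 2) := by ring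
  have hsum : K⁻¹ * K⁻¹ * a + L⁻¹ * L⁻¹ * b - 2 * (K⁻¹ * L⁻¹ * c) =
      ((K * L) ^ 2)⁻¹ * (L ^ 2 * a + K ^ 2 * b - 2 * K * L * c) := by
    field_simp
  rw [existsUnique_quadForm_eq_iff hcs (hdet ▸ mul_ne_zero hKL hgap), hdet, hsum,
    mul_left_comm C, mul_right_inj' hKL]

end Euclidean

end TwoOrbits

open TwoOrbits in
theorem two_orbits_theorem_general (d t : ℕ) (ht : 1 ≤ t)
    {G : Type*} [Group G] [Fintype G]
    (ρ : G →* (EuclideanSpace ℂ (Fin d) ≃ₗᵢ[ℂ] EuclideanSpace ℂ (Fin d)))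
    (p : EuclideanSpace ℂ (Fin d) → EuclideanSpace ℂ (Fin d) → ℝ)
    (hp : ∀ u v, p u v =
      (1 / (Fintype.card G : ℝ)) * ∑ g : G, ‖(inner ℂ u (ρ g v) : ℂ)‖ ^ (2 * t))
    (f : EuclideanSpace ℂ (Fin d) → EuclideanSpace ℂ (Fin d) → ℝ)
    (hf : ∀ u v, f u v = p u u * p v v - (p u v) ^ 2) :
    ((∃ u v, f u v ≠ 0) ∧
        ∀ x y : EuclideanSpace ℂ (Fin d), x ≠ 0 → y ≠ 0 → f x y ≠ 0 →
          ∃! α : ℝ,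
            α ^ 2 * p (((‖x‖ : ℂ))⁻¹ • x) (((‖x‖ : ℂ))⁻¹ • x) +
                (1 - α) ^ 2 * p (((‖y‖ : ℂ))⁻¹ • y) (((‖y‖ : ℂ))⁻¹ • y) +
                2 * α * (1 - α) * p (((‖x‖ : ℂ))⁻¹ • x) (((‖y‖ : ℂ))⁻¹ • y) =
              designConst d t) ↔
      ((∃ u v, f u v ≠ 0) ∧
        ∀ x y : EuclideanSpace ℂ (Fin d),
          f x y =
            designConst d t *
              (‖y‖ ^ (4 * t) * p x x + ‖x‖ ^ (4 * t) * p y y -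
                2 * ‖x‖ ^ (2 * t) * ‖y‖ ^ (2 * t) * p x y)) := by
  obtain rfl : p = orbitMoment ρ t := funext₂ hp
  obtain rfl : f = orbitGap ρ t := funext₂ hf
  have ht0 : t ≠ 0 := by omega
  have hrhs : (fun x y => designConst d t * (‖y‖ ^ (4 * t) * orbitMoment ρ t x x +
      ‖x‖ ^ (4 * t) * orbitMoment ρ t y y -
      2 * ‖x‖ ^ (2 * t) * ‖y‖ ^ (2 * t) * orbitMoment ρ t x y)) ∈
      polynomialAlongLines ℂ (EuclideanSpace ℂ (Fin d)) := by
    have hP := orbitMoment_mem ρ t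
    have hN := norm_pow_mem (𝕜 := ℂ) (E := EuclideanSpace ℂ (Fin d)) t
    have hN2 := norm_pow_mem (𝕜 := ℂ) (E := EuclideanSpace ℂ (Fin d)) (2 * t)
    rw [show 4 * t = 2 * (2 * t) by ring]
    exact Subalgebra.smul_mem _ (sub_mem (add_mem (mul_mem (swap_mem hN2) (diag_mem hP))
      (mul_mem hN2 (swap_mem (diag_mem hP))))
      (mul_mem (mul_mem (mul_mem (algebraMap_mem _ 2) hN) (swap_mem hN)) hP)) _
  refine and_congr_right fun hex => ⟨fun huniq => ?_, fun hid x y hx hy hxy =>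
    (existsUnique_weight_iff_orbitGap_eq ρ t _ hx hy hxy).2 (hid x y)⟩
  refine eq_of_forall_ne_zero_of_mem (orbitGap_mem ρ t) (orbitGap_mem ρ t) hrhs hex
    fun x y hxy => ?_
  have hx : x ≠ 0 := by rintro rfl; simp [orbitGap, orbitMoment_zero_left ρ ht0] at hxy
  have hy : y ≠ 0 := by rintro rfl; simp [orbitGap, orbitMoment_zero_right ρ ht0] at hxy
  exact (existsUnique_weight_iff_orbitGap_eq ρ t _ hx hy hxy).1 (huniq x y hx hy hxy)

/-- **Two orbits (Theorem 4.2).** For a unitary representation `ρ` of a finite group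
`G` on `ℂ^d`, the following are equivalent:
(i) `f_G^{(t)}` is not identically zero and every generic pair of orbits (those with
`f_G^{(t)}(x,y) ≠ 0`) has a unique weighting which is a spherical `(t,t)`-design;
(ii) `f_G^{(t)}` is not identically zero and
`f_G^{(t)}(x,y) = c_t(ℂ^d)(‖y‖^{4t} p(x,x) + ‖x‖^{4t} p(y,y) - 2‖x‖^{2t}‖y‖^{2t} p(x,y))`
for all `x, y`. -/
theorem two_orbits_theorem (d t : ℕ) (hd : 1 ≤ d) (ht : 1 ≤ t)
    {G : Type*} [Group G] [Fintype G]
    (ρ : G →* (EuclideanSpace ℂ (Fin d) ≃ₗᵢ[ℂ] EuclideanSpace ℂ (Fin d)))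
    (p : EuclideanSpace ℂ (Fin d) → EuclideanSpace ℂ (Fin d) → ℝ)
    (hp : ∀ u v, p u v =
      (1 / (Fintype.card G : ℝ)) * ∑ g : G, ‖(inner ℂ u (ρ g v) : ℂ)‖ ^ (2 * t))
    (f : EuclideanSpace ℂ (Fin d) → EuclideanSpace ℂ (Fin d) → ℝ)
    (hf : ∀ u v, f u v = p u u * p v v - (p u v) ^ 2) :
    ((∃ u v, f u v ≠ 0) ∧
        ∀ x y : EuclideanSpace ℂ (Fin d), x ≠ 0 → y ≠ 0 → f x y ≠ 0 →
          ∃! α : ℝ,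
            α ^ 2 * p (((‖x‖ : ℂ))⁻¹ • x) (((‖x‖ : ℂ))⁻¹ • x) +
                (1 - α) ^ 2 * p (((‖y‖ : ℂ))⁻¹ • y) (((‖y‖ : ℂ))⁻¹ • y) +
                2 * α * (1 - α) * p (((‖x‖ : ℂ))⁻¹ • x) (((‖y‖ : ℂ))⁻¹ • y) =
              designConst d t) ↔
      ((∃ u v, f u v ≠ 0) ∧
        ∀ x y : EuclideanSpace ℂ (Fin d),
          f x y =
            designConst d t *
              (‖y‖ ^ (4 * t) * p x x + ‖x‖ ^ (4 * t) * p y y -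
                2 * ‖x‖ ^ (2 * t) * ‖y‖ ^ (2 * t) * p x y)) :=
  two_orbits_theorem_general d t ht ρ p hp f hf
end

section
/- Let G be a finite group acting on ℂ^d (d ≥ 1) by a unitary representation ρ. Then the action is irreducible (the only G-invariant subspaces of ℂ^d are {0} and ℂ^d) if and only if every orbit of every nonzero vector is a tight frame; that is, if and only if for every nonzero x ∈ ℂ^d and every v ∈ ℂ^d, ∑_{g∈G} ⟨v, ρ(g)x⟩·ρ(g)x = (|G|·‖x‖²/d)·v. -/
open scoped InnerProductSpace

/-!
The frame operator `S x = ∑_g ⟨ρ(g)x, ·⟩ ρ(g)x` of an orbit commutes with the representation. If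
the representation is irreducible, Schur's lemma (an eigenspace of `S x` is invariant, hence
everything) makes `S x` a scalar `μ`, and comparing traces, `μ d = tr (S x) = |G| ‖x‖²`.
Conversely, if `S x = c • 1` with `c ≠ 0`, every vector lies in the span of the orbit of `x`, so
an invariant subspace containing `x ≠ 0` is the whole space.
-/

section Schur

variable {K V ι : Type*} [Field K] [IsAlgClosed K] [AddCommGroup V] [Module K V]
  [FiniteDimensional K V] [Nontrivial V]

theorem exists_eq_smul_one_of_commute_of_irreducible (f : ι → Module.End K V)
    (hirr : ∀ W : Submodule K V, (∀ i, ∀ v ∈ W, f i v ∈ W) → W = ⊥ ∨ W = ⊤)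
    (T : Module.End K V) (hT : ∀ i v, T (f i v) = f i (T v)) : ∃ μ : K, T = μ • 1 := by
  obtain ⟨μ, hμ⟩ := Module.End.exists_eigenvalue T
  have hinv : ∀ i, ∀ v ∈ T.eigenspace μ, f i v ∈ T.eigenspace μ := by
    intro i v hv
    rw [Module.End.mem_eigenspace_iff] at hv ⊢
    rw [hT, hv, map_smul]
  have htop : T.eigenspace μ = ⊤ := (hirr _ hinv).resolve_left hμ
  refine ⟨μ, LinearMap.ext fun v => ?_⟩
  exact Module.End.mem_eigenspace_iff.mp (htop ▸ Submodule.mem_top)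

end Schur

section FrameOperator

variable {E G : Type*} [NormedAddCommGroup E] [InnerProductSpace ℂ E] [Group G] [Fintype G]
  (ρ : G →* (E ≃ₗᵢ[ℂ] E))

noncomputable def orbitFrameOperator (x : E) : Module.End ℂ E :=
  ∑ g, (InnerProductSpace.rankOne ℂ (ρ g x) (ρ g x) : E →ₗ[ℂ] E)

theorem orbitFrameOperator_apply (x v : E) :
    orbitFrameOperator ρ x v = ∑ g, ⟪ρ g x, v⟫_ℂ • ρ g x := by
  simp [orbitFrameOperator, LinearMap.sum_apply]

theorem orbitFrameOperator_eq_smul_one_iff (x : E) (c : ℂ) :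
    orbitFrameOperator ρ x = c • 1 ↔ ∀ v, ∑ g, ⟪ρ g x, v⟫_ℂ • ρ g x = c • v := by
  simp [LinearMap.ext_iff, orbitFrameOperator_apply]

theorem orbitFrameOperator_apply_map (x : E) (h : G) (v : E) :
    orbitFrameOperator ρ x (ρ h v) = ρ h (orbitFrameOperator ρ x v) := by
  have hmul : ∀ a b : G, ρ a (ρ b x) = ρ (a * b) x := fun a b => by rw [map_mul]; rfl
  rw [orbitFrameOperator_apply, orbitFrameOperator_apply, map_sum]
  -- reindex the orbit by `g ↦ h⁻¹ g`, using that `ρ h` preserves inner products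
  refine Fintype.sum_equiv (Equiv.mulLeft h⁻¹) _ _ fun g => ?_
  have hg : ρ h (ρ (h⁻¹ * g) x) = ρ g x := by rw [hmul, mul_inv_cancel_left]
  show _ = ρ h (⟪ρ (h⁻¹ * g) x, v⟫_ℂ • ρ (h⁻¹ * g) x)
  rw [LinearIsometryEquiv.map_smul, hg, ← hg, (ρ h).inner_map_map]

theorem orbitFrameOperator_apply_mem {W : Submodule ℂ E} (hW : ∀ g, ∀ v ∈ W, ρ g v ∈ W)
    {x : E} (hx : x ∈ W) (v : E) : orbitFrameOperator ρ x v ∈ W := by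
  rw [orbitFrameOperator_apply]
  exact W.sum_mem fun g _ => W.smul_mem _ (hW g x hx)

theorem trace_orbitFrameOperator [FiniteDimensional ℂ E] (x : E) :
    LinearMap.trace ℂ E (orbitFrameOperator ρ x) = Fintype.card G * (‖x‖ : ℂ) ^ 2 := by
  simp [orbitFrameOperator, map_sum, InnerProductSpace.trace_rankOne, inner_self_eq_norm_sq_to_K]

theorem orbitFrameOperator_eq_smul_one_of_irreducible [FiniteDimensional ℂ E]
    (hirr : ∀ W : Submodule ℂ E, (∀ g, ∀ v ∈ W, ρ g v ∈ W) → W = ⊥ ∨ W = ⊤)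
    {x : E} (hx : x ≠ 0) :
    orbitFrameOperator ρ x =
      (((Fintype.card G : ℝ) * ‖x‖ ^ 2 / Module.finrank ℂ E : ℝ) : ℂ) • 1 := by
  have : Nontrivial E := ⟨⟨x, 0, hx⟩⟩
  obtain ⟨μ, hμ⟩ := exists_eq_smul_one_of_commute_of_irreducible (fun g => (ρ g).toLinearMap)
    hirr (orbitFrameOperator ρ x) (orbitFrameOperator_apply_map ρ x)
  have htrace := trace_orbitFrameOperator ρ x
  rw [hμ, map_smul, LinearMap.trace_one, smul_eq_mul] at htrace
  have hd : (Module.finrank ℂ E : ℂ) ≠ 0 := Nat.cast_ne_zero.mpr Module.finrank_pos.ne'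
  rw [hμ, eq_div_of_mul_eq hd htrace]
  norm_cast

theorem eq_top_of_orbitFrameOperator_eq_smul_one {W : Submodule ℂ E}
    (hW : ∀ g, ∀ v ∈ W, ρ g v ∈ W) {x : E} (hx : x ∈ W) {c : ℂ} (hc : c ≠ 0)
    (hS : orbitFrameOperator ρ x = c • 1) : W = ⊤ := by
  refine Submodule.eq_top_iff'.mpr fun v => ?_
  have hcv : c • v ∈ W := by
    simpa [hS] using orbitFrameOperator_apply_mem ρ hW hx v
  simpa [hc] using W.smul_mem c⁻¹ hcv

theorem irreducible_of_forall_orbitFrameOperator_eq_smul_one [FiniteDimensional ℂ E]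
    (hS : ∀ x : E, x ≠ 0 → orbitFrameOperator ρ x =
      (((Fintype.card G : ℝ) * ‖x‖ ^ 2 / Module.finrank ℂ E : ℝ) : ℂ) • 1)
    (W : Submodule ℂ E) (hW : ∀ g, ∀ v ∈ W, ρ g v ∈ W) : W = ⊥ ∨ W = ⊤ := by
  refine or_iff_not_imp_left.mpr fun hbot => ?_
  obtain ⟨x, hxW, hx⟩ := Submodule.exists_mem_ne_zero_of_ne_bot hbot
  have : Nontrivial E := ⟨⟨x, 0, hx⟩⟩
  have hd := Module.finrank_pos (R := ℂ) (M := E)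
  have hc : (0 : ℝ) < Fintype.card G * ‖x‖ ^ 2 / Module.finrank ℂ E := by positivity
  exact eq_top_of_orbitFrameOperator_eq_smul_one ρ hW hxW (by exact_mod_cast hc.ne') (hS x hx)

end FrameOperator

theorem irreducible_iff_orbits_tight_frames_general (d : ℕ)
    {G : Type*} [Group G] [Fintype G]
    (ρ : G →* (EuclideanSpace ℂ (Fin d) ≃ₗᵢ[ℂ] EuclideanSpace ℂ (Fin d))) :
    (∀ W : Submodule ℂ (EuclideanSpace ℂ (Fin d)),
        (∀ g : G, ∀ v ∈ W, ρ g v ∈ W) → W = ⊥ ∨ W = ⊤) ↔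
      ∀ x : EuclideanSpace ℂ (Fin d), x ≠ 0 →
        ∀ v : EuclideanSpace ℂ (Fin d),
          ∑ g : G, (inner ℂ (ρ g x) v : ℂ) • ρ g x =
            (((Fintype.card G : ℝ) * ‖x‖ ^ 2 / d : ℝ) : ℂ) • v := by
  simp_rw [← orbitFrameOperator_eq_smul_one_iff, ← finrank_euclideanSpace_fin (𝕜 := ℂ) (n := d)]
  exact ⟨fun hirr x hx => orbitFrameOperator_eq_smul_one_of_irreducible ρ hirr hx,
    irreducible_of_forall_orbitFrameOperator_eq_smul_one ρ⟩

/-- A unitary representation of a finite group `G` on `ℂ^d` is irreducible (the only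
invariant subspaces are `{0}` and `ℂ^d`) if and only if every orbit of every nonzero
vector is a tight frame:
`∑_g ⟨v, ρ(g)x⟩ ρ(g)x = (|G| ‖x‖² / d) v` for all `v`
(inner products conjugate-linear so that `⟨v, u⟩u` is the rank-one projection action;
in Mathlib's convention this reads `∑ g, ⟪ρ g x, v⟫ • ρ g x`). -/
theorem irreducible_iff_orbits_tight_frames (d : ℕ) (hd : 1 ≤ d)
    {G : Type*} [Group G] [Fintype G]
    (ρ : G →* (EuclideanSpace ℂ (Fin d) ≃ₗᵢ[ℂ] EuclideanSpace ℂ (Fin d))) :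
    (∀ W : Submodule ℂ (EuclideanSpace ℂ (Fin d)),
        (∀ g : G, ∀ v ∈ W, ρ g v ∈ W) → W = ⊥ ∨ W = ⊤) ↔
      ∀ x : EuclideanSpace ℂ (Fin d), x ≠ 0 →
        ∀ v : EuclideanSpace ℂ (Fin d),
          ∑ g : G, (inner ℂ (ρ g x) v : ℂ) • ρ g x =
            (((Fintype.card G : ℝ) * ‖x‖ ^ 2 / d : ℝ) : ℂ) • v :=
  irreducible_iff_orbits_tight_frames_general d ρ
end

section
/- Let d ≥ 1 and let (x_i)_{i∈I} be a finite family of nonzero vectors in ℂ^d. Then (x_i) is a spherical (1,1)-design, i.e. ∑_{i∈I}∑_{j∈I} |⟨x_i,x_j⟩|² = (1/d)·(∑_{i∈I} ‖x_i‖²)², if and only if (x_i) is a tight frame for ℂ^d: for every v ∈ ℂ^d, ∑_{i∈I} ⟨v, x_i⟩·x_i = ((∑_{i∈I} ‖x_i‖²)/d)·v. -/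
/-!
The frame operator `S = ∑ i, |x i⟩⟨x i|` of the family has trace `T = ∑ i, ‖x i‖²`, and the
squared Hilbert–Schmidt norm of `S` is the frame potential `∑ i, ∑ j, |⟪x i, x j⟫|²`. Expanding,
in dimension `d` the squared Hilbert–Schmidt distance from `S` to `(T / d) • 1` is the frame
potential minus `T² / d`. So the frame potential equals `T² / d` exactly when `S = (T / d) • 1`,
i.e. when the family is a tight frame.
-/

open InnerProductSpace RCLike Module
open scoped InnerProductSpace

section FrameOperator

variable {𝕜 E ι : Type*} [RCLike 𝕜] [NormedAddCommGroup E] [InnerProductSpace 𝕜 E] [Fintype ι]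

variable (𝕜) in
noncomputable def frameOperator (x : ι → E) : E →L[𝕜] E :=
  ∑ i, rankOne 𝕜 (x i) (x i)

variable (x : ι → E)

theorem frameOperator_apply (v : E) : frameOperator 𝕜 x v = ∑ i, ⟪x i, v⟫_𝕜 • x i := by
  simp [frameOperator]

theorem isPositive_frameOperator : (frameOperator 𝕜 x).IsPositive :=
  ContinuousLinearMap.isPositive_sum _ fun i _ ↦ isPositive_rankOne_self (x i)

theorem re_inner_frameOperator_apply_self (v : E) :
    re ⟪v, frameOperator 𝕜 x v⟫_𝕜 = ∑ i, ‖⟪x i, v⟫_𝕜‖ ^ 2 := by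
  simp only [frameOperator_apply, inner_sum, inner_smul_right, map_sum]
  refine Finset.sum_congr rfl fun i _ ↦ ?_
  rw [← inner_conj_symm v (x i), RCLike.mul_conj]
  norm_cast

variable {κ : Type*} [Fintype κ] (b : OrthonormalBasis κ 𝕜 E)

theorem OrthonormalBasis.sum_re_inner_frameOperator_apply :
    ∑ k, re ⟪b k, frameOperator 𝕜 x (b k)⟫_𝕜 = ∑ i, ‖x i‖ ^ 2 := by
  simp only [re_inner_frameOperator_apply_self]
  rw [Finset.sum_comm]
  simp only [b.sum_sq_norm_inner_left]

theorem OrthonormalBasis.sum_norm_sq_frameOperator_apply :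
    ∑ k, ‖frameOperator 𝕜 x (b k)‖ ^ 2 = ∑ i, ∑ j, ‖⟪x i, x j⟫_𝕜‖ ^ 2 := by
  have hS : ∀ u, ⟪frameOperator 𝕜 x u, frameOperator 𝕜 x u⟫_𝕜 =
      ∑ i, ⟪x i, u⟫_𝕜 * ⟪u, frameOperator 𝕜 x (x i)⟫_𝕜 := by
    have hsymm : ∀ u v, ⟪frameOperator 𝕜 x u, v⟫_𝕜 = ⟪u, frameOperator 𝕜 x v⟫_𝕜 :=
      (isPositive_frameOperator x).isSymmetric
    intro u
    nth_rw 2 [frameOperator_apply]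
    simp_rw [inner_sum, inner_smul_right, hsymm]
  calc ∑ k, ‖frameOperator 𝕜 x (b k)‖ ^ 2
      = re (∑ k, ⟪frameOperator 𝕜 x (b k), frameOperator 𝕜 x (b k)⟫_𝕜) := by
        simp only [map_sum, ← norm_sq_eq_re_inner]
    _ = re (∑ i, ⟪x i, frameOperator 𝕜 x (x i)⟫_𝕜) := by
        simp only [hS]
        rw [Finset.sum_comm]
        simp only [b.sum_inner_mul_inner]
    _ = ∑ j, ∑ i, ‖⟪x i, x j⟫_𝕜‖ ^ 2 := by
        simp only [map_sum, re_inner_frameOperator_apply_self]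
    _ = ∑ i, ∑ j, ‖⟪x i, x j⟫_𝕜‖ ^ 2 := Finset.sum_comm

theorem OrthonormalBasis.sum_norm_sq_frameOperator_apply_sub_smul (c : ℝ) :
    ∑ k, ‖frameOperator 𝕜 x (b k) - (c : 𝕜) • b k‖ ^ 2 =
      ∑ i, ∑ j, ‖⟪x i, x j⟫_𝕜‖ ^ 2 - 2 * c * ∑ i, ‖x i‖ ^ 2 + Fintype.card κ * c ^ 2 := by
  have hk : ∀ k, ‖frameOperator 𝕜 x (b k) - (c : 𝕜) • b k‖ ^ 2 =
      ‖frameOperator 𝕜 x (b k)‖ ^ 2 - 2 * c * re ⟪b k, frameOperator 𝕜 x (b k)⟫_𝕜 + c ^ 2 := by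
    intro k
    rw [norm_sub_sq (𝕜 := 𝕜), inner_smul_right, re_ofReal_mul, inner_re_symm (𝕜 := 𝕜),
      norm_smul, norm_ofReal, b.orthonormal.1 k, mul_one, sq_abs]
    ring
  simp only [hk, Finset.sum_add_distrib, Finset.sum_sub_distrib, ← Finset.mul_sum,
    b.sum_norm_sq_frameOperator_apply, b.sum_re_inner_frameOperator_apply, Finset.sum_const,
    Finset.card_univ, nsmul_eq_mul]

theorem frameOperator_eq_smul_id_iff [FiniteDimensional 𝕜 E] :
    frameOperator 𝕜 x = (((∑ i, ‖x i‖ ^ 2) / finrank 𝕜 E : ℝ) : 𝕜) • ContinuousLinearMap.id 𝕜 E ↔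
      ∑ i, ∑ j, ‖⟪x i, x j⟫_𝕜‖ ^ 2 = (∑ i, ‖x i‖ ^ 2) ^ 2 / finrank 𝕜 E := by
  set T := ∑ i, ‖x i‖ ^ 2
  set n : ℝ := (finrank 𝕜 E : ℝ)
  let b := stdOrthonormalBasis 𝕜 E
  have hdist := b.sum_norm_sq_frameOperator_apply_sub_smul x (T / n)
  have hn : 2 * (T / n) * T - n * (T / n) ^ 2 = T ^ 2 / n := by
    rcases eq_or_ne n 0 with h | h
    · simp [h]
    · field_simp
      ring
  rw [Fintype.card_fin] at hdist
  calc frameOperator 𝕜 x = ((T / n : ℝ) : 𝕜) • ContinuousLinearMap.id 𝕜 E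
      ↔ ∀ k, frameOperator 𝕜 x (b k) = ((T / n : ℝ) : 𝕜) • b k := by
        refine ⟨fun h k ↦ by simp [h], fun h ↦ ?_⟩
        exact ContinuousLinearMap.coe_injective <| b.toBasis.ext fun k ↦ by simpa using h k
    _ ↔ ∑ k, ‖frameOperator 𝕜 x (b k) - ((T / n : ℝ) : 𝕜) • b k‖ ^ 2 = 0 := by
        simp [Finset.sum_eq_zero_iff_of_nonneg (fun _ _ ↦ sq_nonneg _), sub_eq_zero]
    _ ↔ ∑ i, ∑ j, ‖⟪x i, x j⟫_𝕜‖ ^ 2 = T ^ 2 / n := by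
        rw [hdist]
        constructor <;> intro h <;> linarith

end FrameOperator

theorem spherical_one_design_iff_tight_frame_general (d : ℕ)
    {ι : Type*} [Fintype ι]
    (x : ι → EuclideanSpace ℂ (Fin d)) :
    (∑ i, ∑ j, ‖(inner ℂ (x i) (x j) : ℂ)‖ ^ 2 =
        (1 / (d : ℝ)) * (∑ i, ‖x i‖ ^ 2) ^ 2) ↔
      ∀ v : EuclideanSpace ℂ (Fin d),
        ∑ i, (inner ℂ (x i) v : ℂ) • x i = (((∑ i, ‖x i‖ ^ 2) / d : ℝ) : ℂ) • v := by
  have h := frameOperator_eq_smul_id_iff (𝕜 := ℂ) x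
  rw [finrank_euclideanSpace_fin] at h
  rw [one_div_mul_eq_div, ← h, ContinuousLinearMap.ext_iff]
  simp only [frameOperator_apply, smul_apply, ContinuousLinearMap.id_apply]
  -- the generic coercion `ℝ → 𝕜` at `𝕜 = ℂ` is `Complex.ofReal` only up to unfolding
  rfl

/-- A finite family of nonzero vectors in `ℂ^d` is a spherical `(1,1)`-design
(equality in the Welch bound with `c_1(ℂ^d) = 1/d`) if and only if it is a tight
frame for `ℂ^d`, with frame constant `(∑ i ‖x i‖²)/d`
(inner products conjugate-linear so that `⟨v, x⟩x` is the rank-one projection action;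
in Mathlib's convention this reads `∑ i, ⟪x i, v⟫ • x i`). -/
theorem spherical_one_design_iff_tight_frame (d : ℕ) (hd : 1 ≤ d)
    {ι : Type*} [Fintype ι]
    (x : ι → EuclideanSpace ℂ (Fin d)) (hx : ∀ i, x i ≠ 0) :
    (∑ i, ∑ j, ‖(inner ℂ (x i) (x j) : ℂ)‖ ^ 2 =
        (1 / (d : ℝ)) * (∑ i, ‖x i‖ ^ 2) ^ 2) ↔
      ∀ v : EuclideanSpace ℂ (Fin d),
        ∑ i, (inner ℂ (x i) v : ℂ) • x i = (((∑ i, ‖x i‖ ^ 2) / d : ℝ) : ℂ) • v :=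
  spherical_one_design_iff_tight_frame_general d x
end

section
/- Let d ≥ 1, let (φ_j)_{j∈J} be a finite family of unit vectors in ℂ^d, and let (c_j)_{j∈J} be real numbers. Then the signed-frame identity v = ∑_{j∈J} c_j·⟨v, φ_j⟩·φ_j holds for all v ∈ ℂ^d if and only if ∑_{j∈J} c_j = d and ∑_{i∈J}∑_{j∈J} c_i c_j |⟨φ_i, φ_j⟩|² = (1/d)·(∑_{j∈J} c_j)²; that is, signed tight frames are exactly the signed spherical (1,1)-designs. -/
open scoped InnerProductSpace ComplexConjugate
open RCLike InnerProductSpace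

/-!
Let `S = ∑ⱼ cⱼ |φⱼ⟩⟨φⱼ|` be the signed frame operator. Over an orthonormal basis `(e_k)`,
`∑ₖ ⟪e_k, S e_k⟫ = ∑ⱼ cⱼ` (as `‖φⱼ‖ = 1`) and `∑ₖ ‖S e_k‖² = ∑ᵢ ∑ⱼ cᵢ cⱼ |⟪φᵢ, φⱼ⟫|²`, so the
Hilbert–Schmidt distance `∑ₖ ‖S e_k - e_k‖²` from `S` to the identity equals
`∑ᵢ ∑ⱼ cᵢ cⱼ |⟪φᵢ, φⱼ⟫|² - 2 ∑ⱼ cⱼ + d`. The design conditions make it vanish, i.e. `S = 1`;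
conversely `S = 1` forces both sums to be `d`.
-/

section

variable {𝕜 E ι κ : Type*} [RCLike 𝕜] [NormedAddCommGroup E] [InnerProductSpace 𝕜 E]
  [Fintype ι] [Fintype κ]

theorem OrthonormalBasis.linearMap_eq_id_iff_sum_norm_sub_sq_eq_zero
    (b : OrthonormalBasis κ 𝕜 E) (T : E →ₗ[𝕜] E) :
    T = LinearMap.id ↔ ∑ k, ‖T (b k) - b k‖ ^ 2 = 0 := by
  rw [Finset.sum_eq_zero_iff_of_nonneg fun k _ => sq_nonneg _]
  simp only [Finset.mem_univ, true_implies, sq_eq_zero_iff, norm_eq_zero, sub_eq_zero]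
  refine ⟨fun hT k => by simp [hT], fun hT => b.toBasis.ext fun k => ?_⟩
  simpa using hT k

theorem OrthonormalBasis.sum_norm_apply_sub_sq (b : OrthonormalBasis κ 𝕜 E) (T : E →ₗ[𝕜] E) :
    ∑ k, ‖T (b k) - b k‖ ^ 2 =
      ∑ k, ‖T (b k)‖ ^ 2 - 2 * ∑ k, re ⟪b k, T (b k)⟫_𝕜 + Fintype.card κ := by
  simp only [norm_sub_sq (𝕜 := 𝕜), inner_re_symm (𝕜 := 𝕜) (T _), b.orthonormal.1,
    Finset.sum_add_distrib, Finset.sum_sub_distrib, Finset.mul_sum]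
  simp

variable (𝕜) in
noncomputable def signedFrameOperator (φ : ι → E) (c : ι → ℝ) : E →L[𝕜] E :=
  ∑ j, (c j : 𝕜) • rankOne 𝕜 (φ j) (φ j)

theorem signedFrameOperator_apply (φ : ι → E) (c : ι → ℝ) (v : E) :
    signedFrameOperator 𝕜 φ c v = ∑ j, ((c j : 𝕜) * ⟪φ j, v⟫_𝕜) • φ j := by
  simp [signedFrameOperator, mul_smul]

theorem OrthonormalBasis.sum_re_inner_signedFrameOperator (b : OrthonormalBasis κ 𝕜 E)
    (φ : ι → E) (c : ι → ℝ) :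
    ∑ k, re ⟪b k, signedFrameOperator 𝕜 φ c (b k)⟫_𝕜 = ∑ j, c j * ‖φ j‖ ^ 2 := by
  have key : ∑ k, ⟪b k, signedFrameOperator 𝕜 φ c (b k)⟫_𝕜 = ∑ j, (c j : 𝕜) * ⟪φ j, φ j⟫_𝕜 := by
    simp only [signedFrameOperator_apply, inner_sum, inner_smul_right]
    rw [Finset.sum_comm]
    refine Finset.sum_congr rfl fun j _ => ?_
    rw [← b.sum_inner_mul_inner, Finset.mul_sum]
    exact Finset.sum_congr rfl fun k _ => by ring
  simpa [map_sum, inner_self_eq_norm_sq_to_K] using congrArg re key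

theorem OrthonormalBasis.sum_norm_signedFrameOperator_sq (b : OrthonormalBasis κ 𝕜 E)
    (φ : ι → E) (c : ι → ℝ) :
    ∑ k, ‖signedFrameOperator 𝕜 φ c (b k)‖ ^ 2 =
      ∑ i, ∑ j, c i * c j * ‖⟪φ i, φ j⟫_𝕜‖ ^ 2 := by
  set S := signedFrameOperator 𝕜 φ c
  have expand : ∀ k, ⟪S (b k), S (b k)⟫_𝕜 =
      ∑ i, ∑ j, (c i : 𝕜) * c j * (⟪φ i, b k⟫_𝕜 * ⟪b k, φ j⟫_𝕜) * ⟪φ j, φ i⟫_𝕜 := by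
    intro k
    simp only [S, signedFrameOperator_apply, sum_inner, inner_sum, inner_smul_left,
      inner_smul_right, map_mul, conj_ofReal, inner_conj_symm, Finset.mul_sum]
    exact Finset.sum_congr rfl fun i _ => Finset.sum_congr rfl fun j _ => by ring
  apply (ofReal_injective (K := 𝕜))
  calc ((∑ k, ‖S (b k)‖ ^ 2 : ℝ) : 𝕜)
      = ∑ i, ∑ j, (c i : 𝕜) * c j * (∑ k, ⟪φ i, b k⟫_𝕜 * ⟪b k, φ j⟫_𝕜) * ⟪φ j, φ i⟫_𝕜 := by
        simp only [ofReal_sum, ofReal_pow, ← inner_self_eq_norm_sq_to_K, expand]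
        rw [Finset.sum_comm]
        refine Finset.sum_congr rfl fun i _ => ?_
        rw [Finset.sum_comm]
        simp only [Finset.mul_sum, Finset.sum_mul]
    _ = ∑ i, ∑ j, (c i : 𝕜) * c j * (⟪φ i, φ j⟫_𝕜 * conj ⟪φ i, φ j⟫_𝕜) := by
        simp only [b.sum_inner_mul_inner, inner_conj_symm, mul_assoc]
    _ = _ := by simp only [RCLike.mul_conj]; push_cast; rfl

end

theorem signed_tight_frame_iff_signed_design_general (d : ℕ)
    {ι : Type*} [Fintype ι]
    (φ : ι → EuclideanSpace ℂ (Fin d)) (hφ : ∀ j, ‖φ j‖ = 1) (c : ι → ℝ) :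
    (∀ v : EuclideanSpace ℂ (Fin d),
        v = ∑ j, ((c j : ℂ) * (inner ℂ (φ j) v : ℂ)) • φ j) ↔
      (∑ j, c j = (d : ℝ) ∧
        ∑ i, ∑ j, c i * c j * ‖(inner ℂ (φ i) (φ j) : ℂ)‖ ^ 2 =
          (1 / (d : ℝ)) * (∑ j, c j) ^ 2) := by
  let S := signedFrameOperator ℂ φ c
  let b := EuclideanSpace.basisFun (Fin d) ℂ
  have trace_eq : ∑ k, re ⟪b k, S (b k)⟫_ℂ = ∑ j, c j := by
    simpa [hφ] using b.sum_re_inner_signedFrameOperator φ c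
  have norm_sq_eq : ∑ k, ‖S (b k)‖ ^ 2 = ∑ i, ∑ j, c i * c j * ‖⟪φ i, φ j⟫_ℂ‖ ^ 2 :=
    b.sum_norm_signedFrameOperator_sq φ c
  have frame_iff : (∀ v, v = ∑ j, ((c j : ℂ) * ⟪φ j, v⟫_ℂ) • φ j) ↔
      (S : EuclideanSpace ℂ (Fin d) →ₗ[ℂ] _) = LinearMap.id := by
    simp [LinearMap.ext_iff, S, signedFrameOperator_apply, eq_comm]
  have self_div : (1 / (d : ℝ)) * d ^ 2 = d := by rw [one_div_mul_eq_div, sq, mul_self_div_self]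
  rw [frame_iff]
  constructor
  · intro hS
    have fixed : ∀ k, S (b k) = b k := fun k => LinearMap.congr_fun hS (b k)
    have hc : ∑ j, c j = d := by simpa [fixed] using trace_eq.symm
    have hq : ∑ i, ∑ j, c i * c j * ‖⟪φ i, φ j⟫_ℂ‖ ^ 2 = d := by
      simpa [fixed] using norm_sq_eq.symm
    exact ⟨hc, by rw [hq, hc, self_div]⟩
  · rintro ⟨hc, hq⟩
    rw [b.linearMap_eq_id_iff_sum_norm_sub_sq_eq_zero, b.sum_norm_apply_sub_sq]
    simp only [ContinuousLinearMap.coe_coe, trace_eq, norm_sq_eq, hq, hc, self_div,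
      Fintype.card_fin]
    ring

/-- **Signed tight frames are exactly the signed spherical `(1,1)`-designs.**
For unit vectors `(φ j)` in `ℂ^d` and real coefficients `(c j)`, the signed-frame
identity `v = ∑ j c_j ⟨v, φ_j⟩ φ_j` holds for all `v` if and only if `∑ j c_j = d`
and `∑ i ∑ j c_i c_j |⟨φ_i, φ_j⟩|² = (1/d)(∑ j c_j)²`
(inner products conjugate-linear so that `⟨v, φ⟩φ` is the rank-one projection action;
in Mathlib's convention this reads `(c j * ⟪φ j, v⟫) • φ j`). -/
theorem signed_tight_frame_iff_signed_design (d : ℕ) (hd : 1 ≤ d)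
    {ι : Type*} [Fintype ι]
    (φ : ι → EuclideanSpace ℂ (Fin d)) (hφ : ∀ j, ‖φ j‖ = 1) (c : ι → ℝ) :
    (∀ v : EuclideanSpace ℂ (Fin d),
        v = ∑ j, ((c j : ℂ) * (inner ℂ (φ j) v : ℂ)) • φ j) ↔
      (∑ j, c j = (d : ℝ) ∧
        ∑ i, ∑ j, c i * c j * ‖(inner ℂ (φ i) (φ j) : ℂ)‖ ^ 2 =
          (1 / (d : ℝ)) * (∑ j, c j) ^ 2) :=
  signed_tight_frame_iff_signed_design_general d φ hφ c
end
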